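/- arXiv:2204.01767 — 8 statements merged into one kernel-verified Lean document; each statement's English description precedes it below -/
import Mathlib

section
/- If ℓ > 1/2, then there exists a constant C such that for all real a, ∫_ℝ dx / ((1+|x|)^{2ℓ} |a-x|^{1/2}) ≤ C / (1+|a|)^{1/2}. -/
/-!
Put `r = (1 + |a|) / 2`. Where `|a - x| ≤ r` the weight satisfies `1 + |x| ≥ r`, so the
integrand is at most `r^(-p) |a - x|^(-s)`, and the integral of `|t|^(-s)` over `|t| ≤ r` is
`2 r^(1-s)/(1-s)`; elsewhere `|a - x|^(-s) ≤ r^(-s)`, leaving the integrable weight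
`(1 + |x|)^(-p)` (`p > 1`).
Both contributions are `O(r^(-s))` because `r ≥ 1/2` and `p > 1`.
-/

open MeasureTheory Set Real

lemma MeasureTheory.Integrable.comp_abs {E : Type*} [NormedAddCommGroup E] {f : ℝ → E}
    (hf : Integrable f) :
    Integrable fun t ↦ f |t| := by
  have hsplit : (fun t ↦ f |t|) = (Ici 0).indicator f + (Iio 0).indicator fun t ↦ f (-t) := by
    ext t
    rcases le_or_gt 0 t with ht | ht
    · simp [ht, abs_of_nonneg, not_lt.mpr ht]
    · simp [ht, abs_of_neg, not_le.mpr ht]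
  rw [hsplit]
  exact (hf.indicator measurableSet_Ici).add (hf.comp_neg.indicator measurableSet_Iio)

lemma integrableOn_Icc_rpow_neg {s r : ℝ} (hs : s < 1) (hr : 0 ≤ r) :
    IntegrableOn (fun t : ℝ ↦ t ^ (-s)) (Icc 0 r) := by
  rw [integrableOn_Icc_iff_integrableOn_Ioc, ← uIoc_of_le hr, ← intervalIntegrable_iff]
  exact intervalIntegral.intervalIntegrable_rpow' (by linarith)

lemma integral_indicator_Icc_rpow_neg_abs {s r : ℝ} (hs : s < 1) (hr : 0 ≤ r) :
    ∫ t : ℝ, (Icc 0 r).indicator (fun t ↦ t ^ (-s)) |t| = 2 * r ^ (1 - s) / (1 - s) := by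
  rw [integral_comp_abs, setIntegral_indicator measurableSet_Icc,
    show Ioi (0 : ℝ) ∩ Icc 0 r = Ioc 0 r by grind,
    ← intervalIntegral.integral_of_le hr, integral_rpow (Or.inl (by linarith)),
    zero_rpow (by linarith)]
  ring_nf

lemma rpow_neg_mul_rpow_neg_le_indicator_add {p s u v r : ℝ} (hp : 0 ≤ p) (hs : 0 ≤ s)
    (hr : 0 < r) (hu : 0 ≤ u) (hv : 0 ≤ v) (hru : v ≤ r → r ≤ u) :
    u ^ (-p) * v ^ (-s) ≤
      r ^ (-p) * (Icc 0 r).indicator (fun t ↦ t ^ (-s)) v + r ^ (-s) * u ^ (-p) := by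
  rcases le_or_gt v r with hvr | hvr
  · rw [indicator_of_mem (show v ∈ Icc 0 r from ⟨hv, hvr⟩)]
    have hur := rpow_le_rpow_of_nonpos hr (hru hvr) (neg_nonpos.2 hp)
    nlinarith [rpow_nonneg hv (-s), rpow_nonneg hr.le (-s), rpow_nonneg hu (-p)]
  · rw [indicator_of_notMem fun h ↦ hvr.not_ge h.2, mul_zero, zero_add, mul_comm]
    exact mul_le_mul_of_nonneg_right (rpow_le_rpow_of_nonpos hr hvr.le (neg_nonpos.2 hs))
      (rpow_nonneg hu _)

lemma half_one_add_abs_le_of_abs_sub_le {a x : ℝ} (h : |a - x| ≤ (1 + |a|) / 2) :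
    (1 + |a|) / 2 ≤ 1 + |x| := by
  linarith [abs_sub_abs_le_abs_sub a x]

lemma integrable_one_add_abs_rpow_neg {p : ℝ} (hp : 1 < p) :
    Integrable fun x : ℝ ↦ (1 + |x|) ^ (-p) := by
  simpa using integrable_one_add_norm (E := ℝ) (by simpa using hp)

theorem integral_one_add_abs_rpow_neg_mul_abs_sub_rpow_neg_le {p s : ℝ} (hp : 1 < p)
    (hs0 : 0 ≤ s) (hs1 : s < 1) (a : ℝ) :
    ∫ x, (1 + |x|) ^ (-p) * |a - x| ^ (-s) ≤
      (2 ^ p / (1 - s) + ∫ x, (1 + |x|) ^ (-p)) * ((1 + |a|) / 2) ^ (-s) := by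
  set r := (1 + |a|) / 2 with hr_def
  have hr : 0 < r := by positivity
  set K : ℝ → ℝ := fun t ↦ (Icc 0 r).indicator (fun t ↦ t ^ (-s)) |t|
  have hK : Integrable K :=
    ((integrableOn_Icc_rpow_neg hs1 hr.le).integrable_indicator measurableSet_Icc).comp_abs
  have hJ := integrable_one_add_abs_rpow_neg hp
  have hmajor : ∀ x, (1 + |x|) ^ (-p) * |a - x| ^ (-s) ≤
      r ^ (-p) * K (a - x) + r ^ (-s) * (1 + |x|) ^ (-p) := fun x ↦
    rpow_neg_mul_rpow_neg_le_indicator_add (by linarith) hs0 hr (by positivity) (abs_nonneg _)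
      half_one_add_abs_le_of_abs_sub_le
  have hnear : r ^ (-p) * (2 * r ^ (1 - s) / (1 - s)) ≤ 2 ^ p / (1 - s) * r ^ (-s) := by
    have hsplit : r ^ (-p) * (2 * r ^ (1 - s)) = 2 ^ p * (2 * r) ^ (1 - p) * r ^ (-s) := by
      have h2 : (2 : ℝ) ^ p * 2 ^ (1 - p) = 2 := by rw [← rpow_add two_pos]; norm_num
      have hr' : r ^ (-p) * r ^ (1 - s) = r ^ (1 - p) * r ^ (-s) := by
        rw [← rpow_add hr, ← rpow_add hr]; ring_nf
      rw [mul_rpow two_pos.le hr.le]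
      linear_combination 2 * hr' - (r ^ (1 - p) * r ^ (-s)) * h2
    have h2r : (2 * r) ^ (1 - p) ≤ 1 :=
      rpow_le_one_of_one_le_of_nonpos (by rw [hr_def]; linarith [abs_nonneg a]) (by linarith)
    have hs1' : 0 < 1 - s := by linarith
    calc r ^ (-p) * (2 * r ^ (1 - s) / (1 - s))
        = 2 ^ p * (2 * r) ^ (1 - p) * r ^ (-s) / (1 - s) := by rw [← hsplit]; ring
      _ ≤ 2 ^ p * 1 * r ^ (-s) / (1 - s) := by gcongr
      _ = 2 ^ p / (1 - s) * r ^ (-s) := by ring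
  calc ∫ x, (1 + |x|) ^ (-p) * |a - x| ^ (-s)
      ≤ ∫ x, r ^ (-p) * K (a - x) + r ^ (-s) * (1 + |x|) ^ (-p) :=
        integral_mono_of_nonneg (.of_forall fun x ↦ by positivity)
          (((hK.comp_sub_left a).const_mul _).add (hJ.const_mul _)) (.of_forall hmajor)
    _ = r ^ (-p) * (2 * r ^ (1 - s) / (1 - s)) + r ^ (-s) * ∫ x, (1 + |x|) ^ (-p) := by
      rw [integral_add ((hK.comp_sub_left a).const_mul _) (hJ.const_mul _), integral_const_mul,
        integral_const_mul, integral_sub_left_eq_self K,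
        integral_indicator_Icc_rpow_neg_abs hs1 hr.le]
    _ ≤ _ := by linarith

theorem exists_integral_one_add_abs_rpow_neg_mul_abs_sub_rpow_neg_le {p s : ℝ} (hp : 1 < p)
    (hs0 : 0 ≤ s) (hs1 : s < 1) :
    ∃ C, ∀ a : ℝ, ∫ x, (1 + |x|) ^ (-p) * |a - x| ^ (-s) ≤ C * (1 + |a|) ^ (-s) := by
  refine ⟨2 ^ s * (2 ^ p / (1 - s) + ∫ x, (1 + |x|) ^ (-p)), fun a ↦
    (integral_one_add_abs_rpow_neg_mul_abs_sub_rpow_neg_le hp hs0 hs1 a).trans_eq ?_⟩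
  rw [div_rpow (by positivity) two_pos.le, rpow_neg two_pos.le, div_inv_eq_mul]
  ring

theorem calc_est_2 (l : ℝ) (hl : 1/2 < l) :
    ∃ C : ℝ, ∀ a : ℝ,
      (∫ x : ℝ, 1 / ((1 + |x|) ^ (2*l) * |a - x| ^ ((1:ℝ)/2))) ≤
        C / (1 + |a|) ^ ((1:ℝ)/2) := by
  obtain ⟨C, hC⟩ := exists_integral_one_add_abs_rpow_neg_mul_abs_sub_rpow_neg_le
    (p := 2 * l) (s := 1 / 2) (by linarith) (by norm_num) (by norm_num)
  refine ⟨C, fun a ↦ ?_⟩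
  convert hC a using 1
  · congr 1 with x
    rw [rpow_neg (by positivity), rpow_neg (abs_nonneg _), one_div, mul_inv]
  · rw [rpow_neg (by positivity), div_eq_mul_inv]
end

section
/- If 1/2 < ℓ < 1 and ℓ' > 1/2, then there exists a constant C such that for all real a and c, ∫_ℝ dx / ((1+|x-a|)^{2(1-ℓ)} (1+|x-c|)^{2ℓ'}) ≤ C / (1+|a-c|)^{2(1-ℓ)}. -/
open MeasureTheory

lemma calc_est_3_aux (α β : ℝ) (hα : 0 < α) (hαβ : α ≤ β) (a c x : ℝ) :
    1 / ((1 + |x - a|) ^ α * (1 + |x - c|) ^ β) ≤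
      2 ^ α / (1 + |a - c|) ^ α * ((1 + |x - a|) ^ (-β) + (1 + |x - c|) ^ (-β)) := by
  set A := 1 + |x - a| with hAdef
  set B := 1 + |x - c| with hBdef
  set D := 1 + |a - c| with hDdef
  have hA : (0:ℝ) < A := by positivity
  have hB : (0:ℝ) < B := by positivity
  have hD : (0:ℝ) < D := by positivity
  have hDα : (0:ℝ) < D ^ α := Real.rpow_pos_of_pos hD α
  have h2α : (0:ℝ) < 2 ^ α := Real.rpow_pos_of_pos two_pos α
  have hAnegβ : (0:ℝ) ≤ A ^ (-β) := (Real.rpow_pos_of_pos hA _).le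
  have hBnegβ : (0:ℝ) ≤ B ^ (-β) := (Real.rpow_pos_of_pos hB _).le
  have key : ∀ X : ℝ, 0 < X → D ≤ 2 * X → 1 / X ^ α ≤ 2 ^ α / D ^ α := by
    intro X hX hDX
    rw [div_le_div_iff₀ (Real.rpow_pos_of_pos hX α) hDα]
    calc 1 * D ^ α = D ^ α := one_mul _
      _ ≤ (2 * X) ^ α := Real.rpow_le_rpow hD.le hDX hα.le
      _ = 2 ^ α * X ^ α := Real.mul_rpow (by norm_num) hX.le
  rcases le_or_gt (|a - c|) (2 * |x - a|) with h | h
  · -- |x-a| large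
    have hDA : D ≤ 2 * A := by rw [hDdef, hAdef]; linarith
    have h1 : 1 / A ^ α ≤ 2 ^ α / D ^ α := key A hA hDA
    have h2 : 1 / (A ^ α * B ^ β) = (1 / A ^ α) * B ^ (-β) := by
      rw [Real.rpow_neg hB.le]
      field_simp
    rw [h2]
    calc (1 / A ^ α) * B ^ (-β) ≤ (2 ^ α / D ^ α) * B ^ (-β) := by
          apply mul_le_mul_of_nonneg_right h1 hBnegβ
      _ ≤ 2 ^ α / D ^ α * (A ^ (-β) + B ^ (-β)) := by
          apply mul_le_mul_of_nonneg_left _ (by positivity)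
          linarith
  · -- |x-a| small, so |x-c| large
    have hxc : |a - c| ≤ |x - a| + |x - c| := by
      calc |a - c| = |(x - c) - (x - a)| := by ring_nf
        _ ≤ |x - c| + |x - a| := abs_sub _ _
        _ = |x - a| + |x - c| := by ring
    have hDB : D ≤ 2 * B := by rw [hDdef, hBdef]; linarith
    have hAB : A ≤ B := by rw [hAdef, hBdef]; linarith
    have h1 : 1 / B ^ α ≤ 2 ^ α / D ^ α := key B hB hDB
    have hsplit : B ^ β = B ^ α * B ^ (β - α) := by
      rw [← Real.rpow_add hB]; ring_nf
    have h3 : A ^ (β - α) ≤ B ^ (β - α) :=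
      Real.rpow_le_rpow hA.le hAB (by linarith)
    have hApos : (0:ℝ) < A ^ α * A ^ (β - α) := by positivity
    have h4 : 1 / (A ^ α * B ^ (β - α)) ≤ A ^ (-β) := by
      have hAβ : A ^ (-β) = 1 / (A ^ α * A ^ (β - α)) := by
        rw [← Real.rpow_add hA α (β - α), show α + (β - α) = β by ring,
          Real.rpow_neg hA.le, one_div]
      rw [hAβ]
      apply one_div_le_one_div_of_le hApos
      exact mul_le_mul_of_nonneg_left h3 (Real.rpow_pos_of_pos hA α).le
    have h2 : 1 / (A ^ α * B ^ β) = (1 / B ^ α) * (1 / (A ^ α * B ^ (β - α))) := by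
      rw [hsplit]; field_simp
    rw [h2]
    calc (1 / B ^ α) * (1 / (A ^ α * B ^ (β - α)))
        ≤ (2 ^ α / D ^ α) * A ^ (-β) := by
          apply mul_le_mul h1 h4 (by positivity) (by positivity)
      _ ≤ 2 ^ α / D ^ α * (A ^ (-β) + B ^ (-β)) := by
          apply mul_le_mul_of_nonneg_left _ (by positivity)
          linarith

theorem calc_est_3 (l l' : ℝ) (hl1 : 1/2 < l) (hl2 : l < 1) (hl' : 1/2 < l') :
    ∃ C : ℝ, ∀ a c : ℝ,
      (∫ x : ℝ, 1 / ((1 + |x - a|) ^ (2*(1 - l)) * (1 + |x - c|) ^ (2*l'))) ≤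
        C / (1 + |a - c|) ^ (2*(1 - l)) := by
  set α := 2*(1 - l) with hαdef
  set β := 2*l' with hβdef
  have hα : 0 < α := by rw [hαdef]; linarith
  have hαβ : α ≤ β := by rw [hαdef, hβdef]; linarith
  have hβ1 : 1 < β := by rw [hβdef]; linarith
  have hInt : Integrable (fun x : ℝ => (1 + ‖x‖) ^ (-β)) :=
    integrable_one_add_norm (by simpa using hβ1)
  set I := ∫ x : ℝ, (1 + ‖x‖) ^ (-β) with hIdef
  refine ⟨2 ^ α * (I + I), fun a c => ?_⟩
  have hIa : Integrable (fun x : ℝ => (1 + |x - a|) ^ (-β)) := by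
    simpa [Real.norm_eq_abs] using hInt.comp_sub_right a
  have hIc : Integrable (fun x : ℝ => (1 + |x - c|) ^ (-β)) := by
    simpa [Real.norm_eq_abs] using hInt.comp_sub_right c
  have hg : Integrable (fun x : ℝ =>
      2 ^ α / (1 + |a - c|) ^ α * ((1 + |x - a|) ^ (-β) + (1 + |x - c|) ^ (-β))) :=
    (hIa.add hIc).const_mul _
  have hcont : Continuous fun x : ℝ => 1 / ((1 + |x - a|) ^ α * (1 + |x - c|) ^ β) := by
    apply continuous_const.div
    · apply Continuous.mul
      · exact (continuous_const.add ((continuous_id.sub continuous_const).abs)).rpow_const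
          (fun x => Or.inr hα.le)
      · exact (continuous_const.add ((continuous_id.sub continuous_const).abs)).rpow_const
          (fun x => Or.inr (by linarith))
    · intro x; positivity
  have hf : Integrable (fun x : ℝ => 1 / ((1 + |x - a|) ^ α * (1 + |x - c|) ^ β)) := by
    apply hg.mono' hcont.aestronglyMeasurable
    filter_upwards with x
    rw [Real.norm_eq_abs, abs_of_nonneg (by positivity)]
    exact calc_est_3_aux α β hα hαβ a c x
  have htransa : (∫ x : ℝ, (1 + |x - a|) ^ (-β)) = I := by
    rw [hIdef]
    have := integral_sub_right_eq_self (μ := volume) (fun y : ℝ => (1 + ‖y‖) ^ (-β)) a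
    simpa [Real.norm_eq_abs] using this
  have htransc : (∫ x : ℝ, (1 + |x - c|) ^ (-β)) = I := by
    rw [hIdef]
    have := integral_sub_right_eq_self (μ := volume) (fun y : ℝ => (1 + ‖y‖) ^ (-β)) c
    simpa [Real.norm_eq_abs] using this
  calc (∫ x : ℝ, 1 / ((1 + |x - a|) ^ α * (1 + |x - c|) ^ β))
      ≤ ∫ x : ℝ, 2 ^ α / (1 + |a - c|) ^ α *
          ((1 + |x - a|) ^ (-β) + (1 + |x - c|) ^ (-β)) :=
        integral_mono hf hg (fun x => calc_est_3_aux α β hα hαβ a c x)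
    _ = 2 ^ α / (1 + |a - c|) ^ α * (I + I) := by
        rw [MeasureTheory.integral_const_mul, integral_add hIa hIc, htransa, htransc]
    _ = 2 ^ α * (I + I) / (1 + |a - c|) ^ α := by ring
end

section
/- If 1/2 < ℓ < 1, then there exists a constant C such that for all c > 0 and all real a, ∫_{|x| ≤ c} dx / ((1+|x|)^{2(1-ℓ)} |a-x|^{1/2}) ≤ C (1+c)^{2(ℓ-1/2)} / (1+|a|)^{1/2}. -/
/-!
Write the integrand as `(1 + |x|) ^ p * |a - x| ^ s` with `p = 2ℓ - 2`, `s = -1/2`, and put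
`r = (1 + |a|) / 2`. Away from the singularity (`|a - x| ≥ r`) the kernel is at most `r ^ s`, and
`∫_{-c}^{c} (1 + |x|) ^ p ≲ (1 + c) ^ (p + 1)`. Near it (`|a - x| < r`) the triangle inequality
gives `r ≤ 1 + |x| ≤ 1 + c`, so the weight is at most `r ^ p ≤ (1 + c) ^ (p + 1) / r`, while
`∫_{|a - x| < r} |a - x| ^ s ≲ r ^ (s + 1)`. Both pieces are `≲ (1 + c) ^ (p + 1) * r ^ s`.
-/

open MeasureTheory Set

section Symmetric

variable {f : ℝ → ℝ} {c : ℝ}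

theorem IntervalIntegrable.comp_abs_neg_self (hc : 0 ≤ c)
    (hf : IntervalIntegrable f volume 0 c) :
    IntervalIntegrable (fun x => f |x|) volume (-c) c := by
  have right : IntervalIntegrable (fun x => f |x|) volume 0 c :=
    hf.congr fun x hx => by rw [uIoc_of_le hc] at hx; simp [abs_of_pos hx.1]
  have left : IntervalIntegrable (fun x => f |x|) volume (-c) 0 := by
    simpa using (IntervalIntegrable.iff_comp_neg (f := fun x => f |x|)).mp right |>.symm
  exact left.trans right

theorem intervalIntegral.integral_comp_abs_neg_self (hc : 0 ≤ c)
    (hf : IntervalIntegrable f volume 0 c) :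
    ∫ x in -c..c, f |x| = 2 * ∫ x in 0..c, f x := by
  have right : ∫ x in 0..c, f |x| = ∫ x in 0..c, f x :=
    integral_congr fun x hx => by rw [uIcc_of_le hc] at hx; simp [abs_of_nonneg hx.1]
  have left : ∫ x in -c..0, f |x| = ∫ x in 0..c, f |x| := by
    simpa using (integral_comp_neg (a := 0) (b := c) fun x => f |x|).symm
  have hint := hf.comp_abs_neg_self hc
  rw [← integral_add_adjacent_intervals (hint.mono_set (uIcc_subset_uIcc_left ?_))
    (hint.mono_set (uIcc_subset_uIcc_right ?_)), left, right]
  · ring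
  all_goals simp [uIcc_of_le, hc]

end Symmetric

section PowerWeights

variable {p s r c : ℝ}

theorem intervalIntegrable_abs_rpow (hs : -1 < s) (hr : 0 ≤ r) :
    IntervalIntegrable (fun x : ℝ => |x| ^ s) volume (-r) r :=
  (intervalIntegral.intervalIntegrable_rpow' hs).comp_abs_neg_self hr

theorem integral_abs_rpow_neg_self (hs : -1 < s) (hr : 0 ≤ r) :
    ∫ x in -r..r, |x| ^ s = 2 * r ^ (s + 1) / (s + 1) := by
  rw [intervalIntegral.integral_comp_abs_neg_self hr (intervalIntegral.intervalIntegrable_rpow' hs),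
    integral_rpow (Or.inl hs), Real.zero_rpow (by linarith)]
  ring

theorem integrableOn_Icc_abs_sub_rpow (hs : -1 < s) (hr : 0 ≤ r) (a : ℝ) :
    IntegrableOn (fun x : ℝ => |a - x| ^ s) (Icc (a - r) (a + r)) := by
  have h := (intervalIntegrable_abs_rpow hs hr).comp_sub_left a
  rw [sub_neg_eq_add] at h
  exact (intervalIntegrable_iff_integrableOn_Icc_of_le (by linarith)).mp h.symm

theorem integral_Icc_abs_sub_rpow (hs : -1 < s) (hr : 0 ≤ r) (a : ℝ) :
    ∫ x in Icc (a - r) (a + r), |a - x| ^ s = 2 * r ^ (s + 1) / (s + 1) := by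
  rw [integral_Icc_eq_integral_Ioc, ← intervalIntegral.integral_of_le (by linarith),
    intervalIntegral.integral_comp_sub_left (fun x => |x| ^ s), sub_add_cancel_left,
    sub_sub_cancel, integral_abs_rpow_neg_self hs hr]

theorem integral_Icc_one_add_abs_rpow_le (hp : -1 < p) (hc : 0 ≤ c) :
    ∫ x in Icc (-c) c, (1 + |x|) ^ p ≤ 2 / (p + 1) * (1 + c) ^ (p + 1) := by
  have hint : IntervalIntegrable (fun x : ℝ => (1 + x) ^ p) volume 0 c := by
    simpa [add_comm] using
      (intervalIntegral.intervalIntegrable_rpow' hp (a := 1) (b := 1 + c)).comp_add_left 1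
  rw [integral_Icc_eq_integral_Ioc, ← intervalIntegral.integral_of_le (by linarith),
    intervalIntegral.integral_comp_abs_neg_self hc hint,
    intervalIntegral.integral_comp_add_left (fun x => x ^ p), integral_rpow (Or.inl hp), add_zero,
    Real.one_rpow, ← mul_div_assoc, div_mul_eq_mul_div]
  gcongr <;> linarith

theorem one_add_abs_rpow_mul_abs_sub_rpow_le (hp₁ : -1 ≤ p) (hp₀ : p ≤ 0) (hs : s ≤ 0)
    (hr : 0 < r) {a : ℝ} (hra : 2 * r ≤ 1 + |a|) {x : ℝ} (hx : |x| ≤ c) :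
    (1 + |x|) ^ p * |a - x| ^ s ≤
      r ^ s * (1 + |x|) ^ p +
        (1 + c) ^ (p + 1) * r⁻¹ * (Icc (a - r) (a + r)).indicator (fun x => |a - x| ^ s) x := by
  have hw : 0 ≤ (1 + |x|) ^ p := Real.rpow_nonneg (by positivity) _
  rcases le_or_gt r |a - x| with far | near
  · have hdecay : |a - x| ^ s ≤ r ^ s := Real.rpow_le_rpow_of_nonpos hr far hs
    have hind : 0 ≤ (Icc (a - r) (a + r)).indicator (fun x => |a - x| ^ s) x :=
      indicator_nonneg (fun _ _ => Real.rpow_nonneg (abs_nonneg _) _) x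
    have hcoef : 0 ≤ (1 + c) ^ (p + 1) * r⁻¹ :=
      mul_nonneg (Real.rpow_nonneg (by linarith [abs_nonneg x]) _) (inv_nonneg.2 hr.le)
    calc (1 + |x|) ^ p * |a - x| ^ s
        ≤ (1 + |x|) ^ p * r ^ s := mul_le_mul_of_nonneg_left hdecay hw
      _ = r ^ s * (1 + |x|) ^ p := mul_comm _ _
      _ ≤ _ := le_add_of_nonneg_right (mul_nonneg hcoef hind)
  · have hmem : x ∈ Icc (a - r) (a + r) := by
      obtain ⟨h₁, h₂⟩ := abs_lt.mp near
      constructor <;> linarith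
    have hrx : r ≤ 1 + |x| := by linarith [abs_sub_abs_le_abs_sub a x]
    have hweight : (1 + |x|) ^ p ≤ (1 + c) ^ (p + 1) * r⁻¹ := calc
      (1 + |x|) ^ p ≤ r ^ p := Real.rpow_le_rpow_of_nonpos hr hrx hp₀
      _ = r ^ (p + 1) * r⁻¹ := by rw [Real.rpow_add_one hr.ne', mul_inv_cancel_right₀ hr.ne']
      _ ≤ (1 + c) ^ (p + 1) * r⁻¹ := by gcongr <;> linarith
    rw [indicator_of_mem hmem]
    exact (mul_le_mul_of_nonneg_right hweight (Real.rpow_nonneg (abs_nonneg _) s)).trans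
      (le_add_of_nonneg_left (mul_nonneg (Real.rpow_nonneg hr.le s) hw))

theorem integral_Icc_one_add_abs_rpow_mul_abs_sub_rpow_le (hp₁ : -1 < p) (hp₀ : p ≤ 0)
    (hs₁ : -1 < s) (hs₀ : s ≤ 0) (hc : 0 ≤ c) (hr : 0 < r) {a : ℝ} (hra : 2 * r ≤ 1 + |a|) :
    ∫ x in Icc (-c) c, (1 + |x|) ^ p * |a - x| ^ s ≤
      (2 / (p + 1) + 2 / (s + 1)) * (1 + c) ^ (p + 1) * r ^ s := by
  set g := (Icc (a - r) (a + r)).indicator fun x => |a - x| ^ s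
  have hg_nonneg : 0 ≤ g := indicator_nonneg fun _ _ => Real.rpow_nonneg (abs_nonneg _) _
  have hg : Integrable g :=
    (integrableOn_Icc_abs_sub_rpow hs₁ hr.le a).integrable_indicator measurableSet_Icc
  have hw : IntegrableOn (fun x : ℝ => (1 + |x|) ^ p) (Icc (-c) c) :=
    (continuous_const.add continuous_abs |>.rpow_const
      fun x => Or.inl (by positivity : 1 + |x| ≠ 0)).integrableOn_Icc
  calc ∫ x in Icc (-c) c, (1 + |x|) ^ p * |a - x| ^ s
      ≤ ∫ x in Icc (-c) c, (r ^ s * (1 + |x|) ^ p + (1 + c) ^ (p + 1) * r⁻¹ * g x) :=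
        integral_mono_of_nonneg
          (.of_forall fun x =>
            mul_nonneg (Real.rpow_nonneg (by positivity) _) (Real.rpow_nonneg (abs_nonneg _) _))
          ((hw.const_mul _).add (hg.integrableOn.const_mul _))
          (ae_restrict_of_forall_mem measurableSet_Icc fun x hx =>
            one_add_abs_rpow_mul_abs_sub_rpow_le hp₁.le hp₀ hs₀ hr hra (abs_le.2 hx))
    _ = r ^ s * (∫ x in Icc (-c) c, (1 + |x|) ^ p) +
          (1 + c) ^ (p + 1) * r⁻¹ * ∫ x in Icc (-c) c, g x := by
        rw [integral_add (hw.const_mul _) (hg.integrableOn.const_mul _), integral_const_mul,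
          integral_const_mul]
    _ ≤ r ^ s * (2 / (p + 1) * (1 + c) ^ (p + 1)) +
          (1 + c) ^ (p + 1) * r⁻¹ * ∫ x, g x := by
        gcongr r ^ s * ?_ + _ * ?_
        · exact integral_Icc_one_add_abs_rpow_le hp₁ hc
        · exact setIntegral_le_integral hg (.of_forall hg_nonneg)
    _ = (2 / (p + 1) + 2 / (s + 1)) * (1 + c) ^ (p + 1) * r ^ s := by
        rw [integral_indicator measurableSet_Icc, integral_Icc_abs_sub_rpow hs₁ hr.le,
          Real.rpow_add_one hr.ne']
        field_simp

end PowerWeights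

theorem calc_est_4 (l : ℝ) (hl1 : 1/2 < l) (hl2 : l < 1) :
    ∃ C : ℝ, ∀ c : ℝ, 0 < c → ∀ a : ℝ,
      (∫ x in Set.Icc (-c) c, 1 / ((1 + |x|) ^ (2*(1 - l)) * |a - x| ^ ((1:ℝ)/2))) ≤
        C * (1 + c) ^ (2*(l - 1/2)) / (1 + |a|) ^ ((1:ℝ)/2) := by
  refine ⟨(2 / (2 * l - 1) + 4) * 2 ^ ((1:ℝ)/2), fun c hc a => ?_⟩
  have hA : 0 < 1 + |a| := by positivity
  have integrand : ∀ x : ℝ, 1 / ((1 + |x|) ^ (2*(1 - l)) * |a - x| ^ ((1:ℝ)/2)) =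
      (1 + |x|) ^ (2 * l - 2) * |a - x| ^ (-((1:ℝ)/2)) := fun x => by
    rw [one_div, mul_inv, ← Real.rpow_neg (by positivity), ← Real.rpow_neg (abs_nonneg _)]
    congr 2
    ring
  have bound := integral_Icc_one_add_abs_rpow_mul_abs_sub_rpow_le (p := 2 * l - 2)
    (s := -(1 / 2)) (r := (1 + |a|) / 2) (a := a) (by linarith) (by linarith) (by norm_num)
    (by norm_num) hc.le (half_pos hA) (by linarith)
  simp_rw [integrand]
  refine bound.trans_eq ?_
  rw [Real.div_rpow hA.le zero_le_two, Real.rpow_neg hA.le, Real.rpow_neg zero_le_two,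
    show 2 * l - 2 + 1 = 2 * (l - 1 / 2) by ring, show 2 * l - 1 = 2 * (l - 1 / 2) by ring]
  norm_num
  ring
end

section
/- Let m = 2j+1 be an odd positive integer with j ≥ 1, and define d_m(ξ, ξ₁) = -ξ₁^m + ξ^m - (ξ-ξ₁)^m. Then there exists a positive constant c_m such that for all real ξ, ξ₁, |d_m(ξ, ξ₁)| ≥ c_m |ξ|^{m-3} |ξ ξ₁ (ξ-ξ₁)|. -/
lemma binom4 (n : ℕ) (x y : ℝ) (hx : 0 ≤ x) (hy : 0 ≤ y) :
    x^(n+3) + y^(n+3) + ((n:ℝ)+3)*(x^(n+2)*y) + ((n:ℝ)+3)*(x*y^(n+2)) ≤ (x+y)^(n+3) := by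
  induction n with
  | zero => norm_num; nlinarith [mul_nonneg hx hy, sq_nonneg (x+y)]
  | succ n ih =>
    have h2 : (x+y)^(n+4) = (x+y) * (x+y)^(n+3) := by rw [pow_succ]; ring
    have h3 : (x+y) * (x^(n+3) + y^(n+3) + ((n:ℝ)+3)*(x^(n+2)*y) + ((n:ℝ)+3)*(x*y^(n+2)))
        ≤ (x+y) * (x+y)^(n+3) := mul_le_mul_of_nonneg_left ih (by positivity)
    have key : x^(n+4) + y^(n+4) + ((n:ℝ)+1+3)*(x^(n+3)*y) + ((n:ℝ)+1+3)*(x*y^(n+3))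
        + ((n:ℝ)+3)*(x^2*y^(n+2)) + ((n:ℝ)+3)*(x^(n+2)*y^2)
        = (x+y) * (x^(n+3) + y^(n+3) + ((n:ℝ)+3)*(x^(n+2)*y) + ((n:ℝ)+3)*(x*y^(n+2))) := by
      ring
    have e1 : (0:ℝ) ≤ ((n:ℝ)+3)*(x^2*y^(n+2)) := by positivity
    have e2 : (0:ℝ) ≤ ((n:ℝ)+3)*(x^(n+2)*y^2) := by positivity
    push_cast
    push_cast at key h3 ⊢
    nlinarith [key, h3, e1, e2, h2]

lemma K0 (n : ℕ) (hn : Odd (n+3)) (a b : ℝ) (hab : |a| ≤ b) :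
    ((n:ℝ)+3)/2^(n+1) * (|a+b|^(n+1) * (|a| * b)) ≤ |(a+b)^(n+3) - a^(n+3) - b^(n+3)| := by
  have hb : 0 ≤ b := le_trans (abs_nonneg a) hab
  have hsum : 0 ≤ a + b := by have := neg_abs_le a; linarith
  have habs : |a + b| = a + b := abs_of_nonneg hsum
  set c : ℝ := ((n:ℝ)+3)/2^(n+1) with hc
  have hcnn : 0 ≤ c := by positivity
  have hpow2 : (2:ℝ) ≤ 2^(n+1) := by
    calc (2:ℝ) = 2^1 := (pow_one 2).symm
    _ ≤ 2^(n+1) := by exact pow_le_pow_right₀ (by norm_num) (by omega)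
  have hc2 : 2 * c ≤ (n:ℝ)+3 := by
    rw [hc, mul_comm, div_mul_eq_mul_div, div_le_iff₀ (by positivity : (0:ℝ) < 2^(n+1))]
    nlinarith [hpow2, Nat.cast_nonneg (α := ℝ) n]
  rcases le_or_gt 0 a with ha | ha
  · -- a ≥ 0
    have haa : |a| = a := abs_of_nonneg ha
    have hbin := binom4 n a b ha hb
    have hd : ((n:ℝ)+3)*(a*b^(n+2)) ≤ (a+b)^(n+3) - a^(n+3) - b^(n+3) := by
      nlinarith [mul_nonneg (mul_nonneg (by positivity : (0:ℝ) ≤ (n:ℝ)+3) (pow_nonneg ha (n+2))) hb]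
    have hdnn : 0 ≤ (a+b)^(n+3) - a^(n+3) - b^(n+3) := by
      nlinarith [mul_nonneg ha (pow_nonneg hb (n+2))]
    rw [abs_of_nonneg hdnn, habs, haa]
    have hab2 : a + b ≤ 2*b := by have := le_abs_self a; linarith
    calc c * ((a+b)^(n+1) * (a * b)) ≤ c * ((2*b)^(n+1) * (a * b)) := by
          gcongr
      _ = (((n:ℝ)+3)/2^(n+1) * 2^(n+1)) * (b^(n+1) * b * a) := by rw [mul_pow]; ring
      _ = ((n:ℝ)+3) * (a * b^(n+2)) := by
          rw [div_mul_cancel₀ _ (by positivity : (2:ℝ)^(n+1) ≠ 0), ← pow_succ]; ring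
      _ ≤ _ := hd
  · -- a < 0
    set t : ℝ := -a with ht
    have haa : |a| = t := abs_of_neg ha
    have htpos : 0 < t := by simp [ht]; linarith
    have htb : t ≤ b := haa ▸ hab
    set e : ℝ := a + b with he
    have hee : e = b - t := by simp [he, ht]; ring
    have henn : 0 ≤ e := hsum
    have hbin := binom4 n e t henn htpos.le
    have het : e + t = b := by simp [he, ht]
    rw [het] at hbin
    have haneg : a^(n+3) = -(t^(n+3)) := by
      rw [ht, hn.neg_pow a]; ring
    have hD : (a+b)^(n+3) - a^(n+3) - b^(n+3) = -(b^(n+3) - e^(n+3) - t^(n+3)) := by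
      rw [haneg, ← he]; ring
    have hR : ((n:ℝ)+3)*(e^(n+2)*t) + ((n:ℝ)+3)*(e*t^(n+2)) ≤ b^(n+3) - e^(n+3) - t^(n+3) := by
      linarith
    have hRnn : 0 ≤ b^(n+3) - e^(n+3) - t^(n+3) := by
      nlinarith [mul_nonneg (pow_nonneg henn (n+2)) htpos.le,
        mul_nonneg henn (pow_nonneg htpos.le (n+2)), Nat.cast_nonneg (α := ℝ) n]
    rw [hD, abs_neg, abs_of_nonneg hRnn, habs, haa]
    rcases le_or_gt (2*t) b with hcase | hcase
    · -- t ≤ b/2 : b ≤ 2e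
      have hb2e : b ≤ 2*e := by rw [hee]; linarith
      have step1 : c * (e^(n+1) * (t * b)) ≤ c * (e^(n+1) * (t * (2*e))) := by
        gcongr
      have step2 : c * (e^(n+1) * (t * (2*e))) = (2*c) * (e^(n+2)*t) := by
        rw [pow_succ]; ring
      have step3 : (2*c) * (e^(n+2)*t) ≤ ((n:ℝ)+3) * (e^(n+2)*t) := by
        apply mul_le_mul_of_nonneg_right hc2
        positivity
      have hext : 0 ≤ ((n:ℝ)+3)*(e*t^(n+2)) := by positivity
      linarith
    · -- t > b/2 : e < t, b < 2t
      have het2 : e < t := by rw [hee]; linarith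
      have hen : e^(n+1) ≤ e * t^n := by
        rw [pow_succ']
        exact mul_le_mul_of_nonneg_left (pow_le_pow_left₀ henn het2.le n) henn
      have step1 : c * (e^(n+1) * (t * b)) ≤ c * ((e * t^n) * (t * (2*t))) := by
        apply mul_le_mul_of_nonneg_left _ hcnn
        apply mul_le_mul hen _ (by positivity) (by positivity)
        apply mul_le_mul_of_nonneg_left (by linarith) htpos.le
      have step2 : c * ((e * t^n) * (t * (2*t))) = (2*c) * (e*t^(n+2)) := by
        rw [pow_succ, pow_succ]; ring
      have step3 : (2*c) * (e*t^(n+2)) ≤ ((n:ℝ)+3) * (e*t^(n+2)) := by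
        apply mul_le_mul_of_nonneg_right hc2
        positivity
      have hext : 0 ≤ ((n:ℝ)+3)*(e^(n+2)*t) := by positivity
      linarith

lemma K1 (n : ℕ) (hn : Odd (n+3)) (a b : ℝ) (h : |a| ≤ |b|) :
    ((n:ℝ)+3)/2^(n+1) * (|a+b|^(n+1) * (|a| * |b|)) ≤ |(a+b)^(n+3) - a^(n+3) - b^(n+3)| := by
  rcases le_or_gt 0 b with hb | hb
  · rw [abs_of_nonneg hb] at h ⊢
    exact K0 n hn a b h
  · have h' : |(-a)| ≤ -b := by rw [abs_neg]; rw [abs_of_neg hb] at h; exact h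
    have := K0 n hn (-a) (-b) h'
    have e1 : (-a) + (-b) = -(a+b) := by ring
    rw [e1, abs_neg, abs_neg, hn.neg_pow, hn.neg_pow, hn.neg_pow] at this
    have e2 : |(-(a + b) ^ (n + 3) - -a ^ (n + 3) - -b ^ (n + 3))|
        = |(a+b)^(n+3) - a^(n+3) - b^(n+3)| := by
      rw [← abs_neg]; ring_nf
    rw [e2] at this
    rw [abs_of_neg hb]
    exact this

lemma Kfull (n : ℕ) (hn : Odd (n+3)) (a b : ℝ) :
    ((n:ℝ)+3)/2^(n+1) * (|a+b|^(n+1) * (|a| * |b|)) ≤ |(a+b)^(n+3) - a^(n+3) - b^(n+3)| := by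
  rcases le_total |a| |b| with h | h
  · exact K1 n hn a b h
  · have := K1 n hn b a h
    have e1 : b + a = a + b := by ring
    rw [e1] at this
    have e2 : |(a + b) ^ (n + 3) - b ^ (n + 3) - a ^ (n + 3)|
        = |(a+b)^(n+3) - a^(n+3) - b^(n+3)| := by ring_nf
    rw [e2] at this
    linarith [this, le_of_eq (by ring :
      ((n:ℝ)+3)/2^(n+1) * (|a+b|^(n+1) * (|a| * |b|))
        = ((n:ℝ)+3)/2^(n+1) * (|a+b|^(n+1) * (|b| * |a|)))]

theorem resonance_lower_bound_xi (m j : ℕ) (hj : 1 ≤ j) (hm : m = 2*j + 1) :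
    ∃ c : ℝ, 0 < c ∧ ∀ ξ ξ₁ : ℝ,
      c * |ξ| ^ (m - 3) * |ξ * ξ₁ * (ξ - ξ₁)| ≤ |(-ξ₁ ^ m + ξ ^ m - (ξ - ξ₁) ^ m)| := by
  obtain ⟨n, hn⟩ : ∃ n, m = n + 3 := ⟨2*j - 2, by omega⟩
  have hodd : Odd (n+3) := by rw [← hn, hm]; exact ⟨j, by ring⟩
  refine ⟨((n:ℝ)+3)/2^(n+1), by positivity, fun ξ ξ₁ => ?_⟩
  have key := Kfull n hodd ξ₁ (ξ - ξ₁)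
  have e0 : ξ₁ + (ξ - ξ₁) = ξ := by ring
  rw [e0] at key
  have e1 : |(ξ ^ (n + 3) - ξ₁ ^ (n + 3) - (ξ - ξ₁) ^ (n + 3))|
      = |(-ξ₁ ^ (n+3) + ξ ^ (n+3) - (ξ - ξ₁) ^ (n+3))| := by ring_nf
  have hm3 : m - 3 = n := by omega
  rw [hn]
  simp only [Nat.add_sub_cancel]
  rw [e1] at key
  have e2 : ((n:ℝ)+3)/2^(n+1) * |ξ| ^ n * |ξ * ξ₁ * (ξ - ξ₁)|
      = ((n:ℝ)+3)/2^(n+1) * (|ξ|^(n+1) * (|ξ₁| * |ξ - ξ₁|)) := by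
    rw [abs_mul, abs_mul, pow_succ]; ring
  rw [e2]
  exact key
end

section
/- Let m = 2j+1 be an odd positive integer with j ≥ 1, and define d_m(ξ, ξ₁) = -ξ₁^m + ξ^m - (ξ-ξ₁)^m. Then there exists a positive constant c_m such that for all real ξ, ξ₁, |d_m(ξ, ξ₁)| ≥ c_m |ξ₁|^{m-3} |ξ ξ₁ (ξ-ξ₁)|. -/
lemma lemA (n : ℕ) : ∀ a b : ℝ, 0 ≤ a → 0 ≤ b →
    a^(n+2) + b^(n+2) + a*b*(a+b)^n ≤ (a+b)^(n+2) := by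
  induction n with
  | zero =>
    intro a b ha hb
    have h : (a+b)^(0+2) = a^(0+2) + b^(0+2) + 2*(a*b)*(a+b)^0 := by ring
    nlinarith [mul_nonneg ha hb]
  | succ n ih =>
    intro a b ha hb
    have h := ih a b ha hb
    have hs : (0:ℝ) ≤ a + b := add_nonneg ha hb
    have h2' : a^(n+3) + b^(n+3) + b*a^(n+2) + a*b^(n+2) + a*b*(a+b)^(n+1)
        ≤ (a+b)^(n+3) := by
      calc a^(n+3) + b^(n+3) + b*a^(n+2) + a*b^(n+2) + a*b*(a+b)^(n+1)
          = (a+b) * (a^(n+2) + b^(n+2) + a*b*(a+b)^n) := by ring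
        _ ≤ (a+b) * (a+b)^(n+2) := mul_le_mul_of_nonneg_left h hs
        _ = (a+b)^(n+3) := by ring
    have hba : 0 ≤ b*a^(n+2) := mul_nonneg hb (pow_nonneg ha (n+2))
    have hab : 0 ≤ a*b^(n+2) := mul_nonneg ha (pow_nonneg hb (n+2))
    show a^(n+3) + b^(n+3) + a*b*(a+b)^(n+1) ≤ (a+b)^(n+3)
    linarith

lemma core (n : ℕ) (hodd : Odd (n+3)) (a b : ℝ) (ha : 0 ≤ a) :
    a^n * |(a + b) * a * b| ≤ |(a+b)^(n+3) - a^(n+3) - b^(n+3)| := by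
  have key : ∀ x y : ℝ, 0 ≤ x → 0 ≤ y →
      x^(n+3) + y^(n+3) + x*y*(x+y)^(n+1) ≤ (x+y)^(n+3) := by
    intro x y hx hy
    have h := lemA (n+1) x y hx hy
    have e1 : x^(n+1+2) = x^(n+3) := by ring
    have e2 : y^(n+1+2) = y^(n+3) := by ring
    have e3 : (x+y)^(n+1+2) = (x+y)^(n+3) := by ring
    linarith [h]
  rcases le_or_gt 0 b with hb | hb
  · -- both nonneg
    have hs : (0:ℝ) ≤ a + b := add_nonneg ha hb
    have h := key a b ha hb
    have hd : (0:ℝ) ≤ (a+b)^(n+3) - a^(n+3) - b^(n+3) := by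
      nlinarith [mul_nonneg (mul_nonneg ha hb) (pow_nonneg hs (n+1))]
    rw [abs_of_nonneg hd, abs_of_nonneg (by positivity : (0:ℝ) ≤ (a+b)*a*b)]
    have hle : a ^ n ≤ (a+b)^n := pow_le_pow_left₀ ha (by linarith) n
    have h1 : a^n * ((a+b)*a*b) ≤ (a+b)^n * ((a+b)*a*b) :=
      mul_le_mul_of_nonneg_right hle (by positivity)
    have h2 : (a+b)^n * ((a+b)*a*b) = a*b*(a+b)^(n+1) := by ring
    linarith
  · rcases le_or_gt 0 (a+b) with hs | hs
    · -- a+b ≥ 0 > b ; a = (a+b) + (-b)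
      have hnb : (0:ℝ) ≤ -b := by linarith
      have h := key (a+b) (-b) hs hnb
      have e : (a+b) + (-b) = a := by ring
      rw [e] at h
      have hbm : (-b)^(n+3) = -b^(n+3) := Odd.neg_pow hodd b
      rw [hbm] at h
      -- h : (a+b)^(n+3) + -b^(n+3) + (a+b)*(-b)*a^(n+1) ≤ a^(n+3)
      have hd : (a+b)^(n+3) - a^(n+3) - b^(n+3) ≤ 0 := by
        nlinarith [mul_nonneg (mul_nonneg hs hnb) (pow_nonneg ha (n+1))]
      rw [abs_of_nonpos hd]
      have habs2 : |(a+b)*a*b| = (a+b)*a*(-b) := by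
        rw [abs_mul, abs_mul, abs_of_nonneg hs, abs_of_nonneg ha, abs_of_neg hb]
      rw [habs2]
      have hr : a^n * ((a+b)*a*(-b)) = (a+b)*(-b)*a^(n+1) := by ring
      linarith
    · -- a + b < 0, so -b > a ≥ 0 ; -b = a + (-(a+b))
      have hnb : (0:ℝ) ≤ -b := by linarith
      have hns : (0:ℝ) ≤ -(a+b) := by linarith
      have h := key a (-(a+b)) ha hns
      have e : a + (-(a+b)) = -b := by ring
      rw [e] at h
      have h1 : (-(a+b))^(n+3) = -(a+b)^(n+3) := Odd.neg_pow hodd _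
      have h2 : (-b)^(n+3) = -b^(n+3) := Odd.neg_pow hodd b
      rw [h1, h2] at h
      -- h : a^(n+3) + -(a+b)^(n+3) + a*(-(a+b))*(-b)^(n+1) ≤ -b^(n+3)
      have hd : 0 ≤ (a+b)^(n+3) - a^(n+3) - b^(n+3) := by
        nlinarith [mul_nonneg (mul_nonneg ha hns) (pow_nonneg hnb (n+1))]
      rw [abs_of_nonneg hd]
      have habs2 : |(a+b)*a*b| = -(a+b)*a*(-b) := by
        rw [abs_mul, abs_mul, abs_of_neg hs, abs_of_nonneg ha, abs_of_neg hb]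
      rw [habs2]
      have hab2 : a ≤ -b := by linarith
      have hpn : a^n ≤ (-b)^n := pow_le_pow_left₀ ha hab2 n
      have hstep : a^n * (a*(-b)*(-(a+b))) ≤ (-b)^n * (a*(-b)*(-(a+b))) :=
        mul_le_mul_of_nonneg_right hpn (by positivity)
      have hr1 : a^n * (-(a+b)*a*(-b)) = a^n * (a*(-b)*(-(a+b))) := by ring
      have hr2 : (-b)^n * (a*(-b)*(-(a+b))) = a*(-(a+b))*(-b)^(n+1) := by ring
      linarith

theorem resonance_lower_bound_xi1 (m j : ℕ) (hj : 1 ≤ j) (hm : m = 2*j + 1) :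
    ∃ c : ℝ, 0 < c ∧ ∀ ξ ξ₁ : ℝ,
      c * |ξ₁| ^ (m - 3) * |ξ * ξ₁ * (ξ - ξ₁)| ≤ |(-ξ₁ ^ m + ξ ^ m - (ξ - ξ₁) ^ m)| := by
  obtain ⟨n, hn, hmn⟩ : ∃ n, m = n + 3 ∧ m - 3 = n := ⟨2*(j-1), by omega, by omega⟩
  have hodd : Odd (n+3) := ⟨j, by omega⟩
  refine ⟨1, one_pos, fun ξ ξ₁ => ?_⟩
  rw [hmn, hn, one_mul]
  rcases le_or_gt 0 ξ₁ with h | h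
  · have H := core n hodd ξ₁ (ξ - ξ₁) h
    have e : ξ₁ + (ξ - ξ₁) = ξ := by ring
    rw [e] at H
    have e3 : |ξ^(n+3) - ξ₁^(n+3) - (ξ-ξ₁)^(n+3)|
        = |(-ξ₁^(n+3) + ξ^(n+3) - (ξ-ξ₁)^(n+3))| := by
      rw [show ξ^(n+3) - ξ₁^(n+3) - (ξ-ξ₁)^(n+3)
        = -ξ₁^(n+3) + ξ^(n+3) - (ξ-ξ₁)^(n+3) from by ring]
    rw [e3] at H
    rw [abs_of_nonneg h]
    exact H
  · have h0 : (0:ℝ) ≤ -ξ₁ := by linarith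
    have H := core n hodd (-ξ₁) (-(ξ - ξ₁)) h0
    have e : -ξ₁ + -(ξ - ξ₁) = -ξ := by ring
    rw [e] at H
    have e2 : |(-ξ) * -ξ₁ * -(ξ-ξ₁)| = |ξ*ξ₁*(ξ-ξ₁)| := by
      rw [show (-ξ) * -ξ₁ * -(ξ-ξ₁) = -(ξ*ξ₁*(ξ-ξ₁)) from by ring, abs_neg]
    have e3 : |(-ξ)^(n+3) - (-ξ₁)^(n+3) - (-(ξ-ξ₁))^(n+3)|
        = |(-ξ₁^(n+3) + ξ^(n+3) - (ξ-ξ₁)^(n+3))| := by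
      rw [Odd.neg_pow hodd, Odd.neg_pow hodd, Odd.neg_pow hodd,
        show -ξ^(n+3) - -ξ₁^(n+3) - -(ξ-ξ₁)^(n+3)
          = -(-ξ₁^(n+3) + ξ^(n+3) - (ξ-ξ₁)^(n+3)) from by ring, abs_neg]
    rw [e2, e3] at H
    rw [abs_of_neg h]
    exact H
end

section
/- Let m = 2j+1 with integer j ≥ 1, let ℓ be an integer with 0 ≤ ℓ ≤ j-1, let -1 ≤ s ≤ 1/2 and 0 ≤ b < 1/2. Define G₁(τ) = ∫_ℝ ξ^{2ℓ} / ((1+|τ-ξ^m|)^{2-2b} (1+|ξ|)^{2s}) dξ. Then there is a constant c_{s,b} such that sup over τ ∈ ℝ of (1+|τ|)^{2(s+j-ℓ)/m} G₁(τ) ≤ c_{s,b}. -/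
open MeasureTheory

lemma odd_pow_surj {m : ℕ} (hm : Odd m) : Function.Surjective (fun x : ℝ => x ^ m) := by
  intro y
  have hm0 : m ≠ 0 := by rintro rfl; simp at hm
  rcases le_or_gt 0 y with hy | hy
  · refine ⟨y ^ ((m : ℝ)⁻¹), ?_⟩
    simp only
    rw [← Real.rpow_natCast (y ^ ((m:ℝ)⁻¹)) m, ← Real.rpow_mul hy,
      inv_mul_cancel₀ (by exact_mod_cast hm0), Real.rpow_one]
  · refine ⟨-((-y) ^ ((m : ℝ)⁻¹)), ?_⟩
    simp only
    rw [hm.neg_pow, ← Real.rpow_natCast ((-y) ^ ((m:ℝ)⁻¹)) m, ← Real.rpow_mul (by linarith),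
      inv_mul_cancel₀ (by exact_mod_cast hm0), Real.rpow_one, neg_neg]

lemma odd_pow_deriv_nonneg {m : ℕ} (hm : Odd m) (x : ℝ) : 0 ≤ (m : ℝ) * x ^ (m - 1) := by
  obtain ⟨k, rfl⟩ := hm
  have : Even (2 * k + 1 - 1) := by simp [Nat.add_sub_cancel]
  exact mul_nonneg (by positivity) (this.pow_nonneg x)

lemma integral_comp_odd_pow {m : ℕ} (hm : Odd m) (g : ℝ → ℝ) :
    ∫ x : ℝ, (m : ℝ) * x ^ (m - 1) * g (x ^ m) = ∫ u : ℝ, g u := by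
  have himg : (fun x : ℝ => x ^ m) '' Set.univ = Set.univ := by
    rw [Set.image_univ, Set.range_eq_univ]; exact odd_pow_surj hm
  have h := integral_image_eq_integral_abs_deriv_smul (f := fun x : ℝ => x ^ m)
    (f' := fun x : ℝ => (m : ℝ) * x ^ (m - 1)) MeasurableSet.univ
    (fun x _ => (hasDerivAt_pow m x).hasDerivWithinAt) ((hm.strictMono_pow (R := ℝ)).injective.injOn) g
  rw [himg, Measure.restrict_univ] at h
  rw [h]
  refine integral_congr_ae (Filter.Eventually.of_forall fun x => ?_)
  simp only [smul_eq_mul, abs_of_nonneg (odd_pow_deriv_nonneg hm x)]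

lemma integrable_comp_odd_pow {m : ℕ} (hm : Odd m) {g : ℝ → ℝ} (hg : Integrable g) :
    Integrable (fun x : ℝ => (m : ℝ) * x ^ (m - 1) * g (x ^ m)) := by
  have himg : (fun x : ℝ => x ^ m) '' Set.univ = Set.univ := by
    rw [Set.image_univ, Set.range_eq_univ]; exact odd_pow_surj hm
  have h := integrableOn_image_iff_integrableOn_abs_deriv_smul (f := fun x : ℝ => x ^ m)
    (f' := fun x : ℝ => (m : ℝ) * x ^ (m - 1)) MeasurableSet.univ
    (fun x _ => (hasDerivAt_pow m x).hasDerivWithinAt) ((hm.strictMono_pow (R := ℝ)).injective.injOn) g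
  rw [himg] at h
  have h2 : IntegrableOn (fun x => |(m:ℝ) * x ^ (m-1)| • g (x ^ m)) Set.univ := by
    rw [← h]; exact hg.integrableOn
  rw [integrableOn_univ] at h2
  refine h2.congr (Filter.Eventually.of_forall fun x => ?_)
  simp only [smul_eq_mul, abs_of_nonneg (odd_pow_deriv_nonneg hm x)]

lemma integrable_one_add_abs_rpow {r : ℝ} (hr : 1 < r) :
    Integrable (fun x : ℝ => 1 / (1 + |x|) ^ r) := by
  have h : (Module.finrank ℝ ℝ : ℝ) < r := by
    rw [Module.finrank_self]; exact_mod_cast hr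
  have := integrable_one_add_norm (E := ℝ) (μ := volume) h
  refine this.congr (Filter.Eventually.of_forall fun x => ?_)
  simp only [Real.norm_eq_abs, Real.rpow_neg (by positivity : (0:ℝ) ≤ 1 + |x|), one_div]

lemma integrable_shift {r : ℝ} (hr : 1 < r) (τ : ℝ) :
    Integrable (fun u : ℝ => 1 / (1 + |τ - u|) ^ r) :=
  (integrable_one_add_abs_rpow hr).comp_sub_left τ

lemma integral_shift {r : ℝ} (τ : ℝ) :
    ∫ u : ℝ, 1 / (1 + |τ - u|) ^ r = ∫ u : ℝ, 1 / (1 + |u|) ^ r :=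
  integral_sub_left_eq_self (fun u : ℝ => 1 / (1 + |u|) ^ r) volume τ


set_option maxHeartbeats 1600000 in
lemma key_pointwise (m j l : ℕ) (s b α q : ℝ)
    (hl : l + 1 ≤ j) (hm : m = 2*j+1)
    (hα0 : 0 ≤ α) (hα1 : α ≤ 1)
    (hβ : 1 < 2 - 2*b) (hβ2 : 2 - 2*b ≤ 2)
    (hmα : (m:ℝ) * α = 2*(s+(j:ℝ)-(l:ℝ)))
    (hqdef : q = 2*(j:ℝ) - (m:ℝ)*(2-2*b)) (τ ξ : ℝ) :
    (1+|τ|)^α * (ξ^(2*l)/((1+|τ-ξ^m|)^(2-2*b)*(1+|ξ|)^(2*s))) ≤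
      (4:ℝ)^(3*m+1) * ((1+|ξ|)^q + ξ^(m-1)/(1+|τ-ξ^m|)^(2-2*b)) := by
  obtain ⟨X, hXdef⟩ : ∃ X : ℝ, X = 1+|τ-ξ^m| := ⟨_, rfl⟩
  obtain ⟨Y, hYdef⟩ : ∃ Y : ℝ, Y = 1+|ξ| := ⟨_, rfl⟩
  obtain ⟨T, hTdef⟩ : ∃ T : ℝ, T = 1+|τ| := ⟨_, rfl⟩
  rw [← hXdef, ← hYdef, ← hTdef]
  have hX1 : (1:ℝ) ≤ X := by rw [hXdef]; linarith [abs_nonneg (τ-ξ^m)]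
  have hY1 : (1:ℝ) ≤ Y := by rw [hYdef]; linarith [abs_nonneg ξ]
  have hT1 : (1:ℝ) ≤ T := by rw [hTdef]; linarith [abs_nonneg τ]
  have hX0 : (0:ℝ) < X := lt_of_lt_of_le one_pos hX1
  have hY0 : (0:ℝ) < Y := lt_of_lt_of_le one_pos hY1
  have hT0 : (0:ℝ) < T := lt_of_lt_of_le one_pos hT1
  have hXβ0 : 0 < X^(2-2*b) := Real.rpow_pos_of_pos hX0 _
  have hYs0 : 0 < Y^(2*s) := Real.rpow_pos_of_pos hY0 _
  have hYq0 : 0 < Y^q := Real.rpow_pos_of_pos hY0 _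
  have hTα0 : 0 < T^α := Real.rpow_pos_of_pos hT0 _
  have hC0 : (0:ℝ) < 4^(3*m+1) := by positivity
  have hevl : Even (2*l) := even_two_mul l
  have hevm : Even (m-1) := ⟨j, by omega⟩
  have hξY : |ξ| ≤ Y := by rw [hYdef]; linarith
  have hnum : ξ^(2*l) ≤ Y^(2*l) := by
    calc ξ^(2*l) = |ξ|^(2*l) := (hevl.pow_abs ξ).symm
      _ ≤ Y^(2*l) := pow_le_pow_left₀ (abs_nonneg _) hξY _
  have habs : |ξ^m| = |ξ|^m := abs_pow ξ m
  have hfrac0 : 0 ≤ ξ^(m-1)/X^(2-2*b) := div_nonneg (hevm.pow_nonneg ξ) hXβ0.le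
  have hγ0 : 0 ≤ 2-2*b-α := by linarith
  -- constants
  have hKle : (2:ℝ)^α * ((2^m:ℝ))^(2-2*b-α) ≤ 4^(3*m+1) := by
    have e1 : (2:ℝ)^α ≤ 2 := by
      calc (2:ℝ)^α ≤ (2:ℝ)^(1:ℝ) := Real.rpow_le_rpow_of_exponent_le one_le_two hα1
        _ = 2 := Real.rpow_one 2
    have e2 : ((2^m:ℝ))^(2-2*b-α) ≤ ((2^m:ℝ))^(2:ℝ) :=
      Real.rpow_le_rpow_of_exponent_le (one_le_pow₀ one_le_two) (by linarith)
    have e3 : ((2^m:ℝ))^(2:ℝ) = (4:ℝ)^m := by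
      rw [show (2:ℝ) = ((2:ℕ):ℝ) by norm_num, Real.rpow_natCast, ← pow_mul,
        show m*2 = 2*m from by ring, pow_mul]
      norm_num
    have e4 : (0:ℝ) ≤ ((2^m:ℝ))^(2-2*b-α) := Real.rpow_nonneg (by positivity) _
    have e5 : (2:ℝ)*4^m ≤ 4^(3*m+1) := by
      calc (2:ℝ)*4^m ≤ 4*4^m :=
            mul_le_mul_of_nonneg_right (by norm_num) (by positivity)
        _ = 4^(m+1) := by ring
        _ ≤ 4^(3*m+1) := pow_le_pow_right₀ (by norm_num) (by omega)
    calc (2:ℝ)^α * ((2^m:ℝ))^(2-2*b-α) ≤ 2 * ((2^m:ℝ))^(2:ℝ) :=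
          mul_le_mul e1 e2 e4 (by norm_num)
      _ = 2*4^m := by rw [e3]
      _ ≤ 4^(3*m+1) := e5
  by_cases hcase : 2*|ξ^m| ≤ |τ|
  · -- low frequency region
    have hsub : |τ| - |ξ^m| ≤ |τ-ξ^m| := abs_sub_abs_le_abs_sub τ (ξ^m)
    have h1 : T ≤ 2*X := by rw [hTdef, hXdef]; linarith
    have h2 : (Y^m:ℝ) ≤ 2^m * X := by
      have hmax : Y ≤ 2*max 1 |ξ| := by
        rw [hYdef]; rcases le_total |ξ| 1 with h|h
        · rw [max_eq_left h]; linarith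
        · rw [max_eq_right h]; linarith
      have hmaxpow : (max 1 |ξ|)^m ≤ 1 + |ξ|^m := by
        rcases le_total |ξ| 1 with h|h
        · rw [max_eq_left h, one_pow]; linarith [pow_nonneg (abs_nonneg ξ) m]
        · rw [max_eq_right h]; linarith [pow_nonneg (abs_nonneg ξ) m]
      have hXge : 1 + |ξ|^m ≤ X := by rw [hXdef, ← habs]; linarith
      calc (Y^m:ℝ) ≤ (2*max 1 |ξ|)^m :=
            pow_le_pow_left₀ (by positivity) hmax m
        _ = 2^m * (max 1 |ξ|)^m := mul_pow 2 _ m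
        _ ≤ 2^m * (1+|ξ|^m) :=
            mul_le_mul_of_nonneg_left hmaxpow (by positivity)
        _ ≤ 2^m * X :=
            mul_le_mul_of_nonneg_left hXge (by positivity)
    have hXβ : T^α * ((Y^m : ℝ))^(2-2*b-α) ≤
        (2:ℝ)^α * ((2^m : ℝ))^(2-2*b-α) * X^(2-2*b) := by
      have e1 : T^α ≤ (2*X)^α := Real.rpow_le_rpow hT0.le h1 hα0
      have e2 : ((Y^m:ℝ))^(2-2*b-α) ≤ ((2^m:ℝ)*X)^(2-2*b-α) :=
        Real.rpow_le_rpow (by positivity) h2 hγ0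
      calc T^α * ((Y^m:ℝ))^(2-2*b-α) ≤ (2*X)^α * ((2^m:ℝ)*X)^(2-2*b-α) :=
            mul_le_mul e1 e2 (Real.rpow_nonneg (by positivity) _)
              (Real.rpow_nonneg (by positivity) _)
        _ = (2:ℝ)^α * ((2^m:ℝ))^(2-2*b-α) * X^(2-2*b) := by
            rw [Real.mul_rpow (by norm_num : (0:ℝ) ≤ 2) hX0.le,
              Real.mul_rpow (by positivity : (0:ℝ) ≤ (2:ℝ)^m) hX0.le,
              show (2:ℝ)^α * X^α * ((2^m:ℝ)^(2-2*b-α) * X^(2-2*b-α)) =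
                (2:ℝ)^α * (2^m:ℝ)^(2-2*b-α) * (X^α * X^(2-2*b-α)) from by ring,
              ← Real.rpow_add hX0, show α + (2-2*b-α) = 2-2*b from by ring]
    have hYc : Y^q * ((Y^m:ℝ))^(2-2*b-α) * Y^(2*s) = (Y^(2*l) : ℝ) := by
      rw [← Real.rpow_natCast Y m, ← Real.rpow_mul hY0.le, ← Real.rpow_add hY0,
        ← Real.rpow_add hY0, ← Real.rpow_natCast Y (2*l)]
      congr 1
      push_cast [hqdef]
      linarith [hmα]
    suffices h : T^α * (ξ^(2*l)/(X^(2-2*b)*Y^(2*s))) ≤ 4^(3*m+1) * Y^q by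
      calc T^α * (ξ^(2*l)/(X^(2-2*b)*Y^(2*s))) ≤ 4^(3*m+1) * Y^q := h
        _ ≤ 4^(3*m+1) * (Y^q + ξ^(m-1)/X^(2-2*b)) :=
            mul_le_mul_of_nonneg_left (le_add_of_nonneg_right hfrac0) hC0.le
    rw [← mul_div_assoc, div_le_iff₀ (by positivity)]
    have step : T^α * (Y^(2*l):ℝ) ≤ 4^(3*m+1) * Y^q * (X^(2-2*b) * Y^(2*s)) := by
      calc T^α * (Y^(2*l):ℝ) = T^α * (Y^q * ((Y^m:ℝ))^(2-2*b-α) * Y^(2*s)) := by rw [hYc]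
        _ = (T^α * ((Y^m:ℝ))^(2-2*b-α)) * (Y^q * Y^(2*s)) := by ring
        _ ≤ ((2:ℝ)^α * ((2^m:ℝ))^(2-2*b-α) * X^(2-2*b)) * (Y^q * Y^(2*s)) := by
            have h0 : 0 ≤ Y^q * Y^(2*s) := by positivity
            exact mul_le_mul_of_nonneg_right hXβ h0
        _ ≤ (4^(3*m+1) * X^(2-2*b)) * (Y^q * Y^(2*s)) :=
            mul_le_mul_of_nonneg_right
              (mul_le_mul_of_nonneg_right hKle hXβ0.le) (by positivity)
        _ = 4^(3*m+1) * Y^q * (X^(2-2*b) * Y^(2*s)) := by ring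
    calc T^α * ξ^(2*l) ≤ T^α * (Y^(2*l):ℝ) :=
            mul_le_mul_of_nonneg_left hnum hTα0.le
      _ ≤ 4^(3*m+1) * Y^q * (X^(2-2*b) * Y^(2*s)) := step
  · -- high frequency region
    push_neg at hcase
    have hT4 : T ≤ 4*(Y^m:ℝ) := by
      have h1 : |ξ|^m ≤ Y^m := pow_le_pow_left₀ (abs_nonneg _) hξY m
      have h2 : (1:ℝ) ≤ Y^m := one_le_pow₀ hY1
      rw [hTdef]; rw [habs] at hcase; linarith
    have hTα : T^α ≤ 4 * ((Y^m:ℝ))^α := by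
      calc T^α ≤ (4*(Y^m:ℝ))^α := Real.rpow_le_rpow hT0.le hT4 hα0
        _ = (4:ℝ)^α * ((Y^m:ℝ))^α := Real.mul_rpow (by norm_num) (by positivity)
        _ ≤ 4 * ((Y^m:ℝ))^α := by
            have e1 : (4:ℝ)^α ≤ 4 := by
              calc (4:ℝ)^α ≤ (4:ℝ)^(1:ℝ) :=
                    Real.rpow_le_rpow_of_exponent_le (by norm_num) hα1
                _ = 4 := Real.rpow_one 4
            have e2 : 0 ≤ ((Y^m:ℝ))^α := Real.rpow_nonneg (by positivity) _
            exact mul_le_mul_of_nonneg_right e1 e2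
    have hsplit : ((Y^m:ℝ))^α = Y^(2*s) * (Y^(2*(j-l)) : ℝ) := by
      rw [← Real.rpow_natCast Y m, ← Real.rpow_mul hY0.le, hmα,
        show 2*(s+(j:ℝ)-(l:ℝ)) = 2*s + ((2*(j-l):ℕ):ℝ) from by
          push_cast [Nat.cast_sub (by omega : l ≤ j)]; ring,
        Real.rpow_add hY0, Real.rpow_natCast]
    have main2 : T^α * (ξ^(2*l)/(X^(2-2*b)*Y^(2*s))) ≤
        4 * (Y^(m-1):ℝ) / X^(2-2*b) := by
      calc T^α * (ξ^(2*l)/(X^(2-2*b)*Y^(2*s)))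
          ≤ (4 * (Y^(2*s) * (Y^(2*(j-l)):ℝ))) * (ξ^(2*l)/(X^(2-2*b)*Y^(2*s))) := by
            have hdiv0 : 0 ≤ ξ^(2*l)/(X^(2-2*b)*Y^(2*s)) :=
              div_nonneg (hevl.pow_nonneg ξ) (by positivity)
            refine mul_le_mul_of_nonneg_right ?_ hdiv0
            rw [← hsplit]; exact hTα
        _ = 4 * (Y^(2*(j-l)):ℝ) * ξ^(2*l) / X^(2-2*b) := by
            field_simp
        _ ≤ 4 * (Y^(m-1):ℝ) / X^(2-2*b) := by
            have hYY : (Y^(2*(j-l)):ℝ) * ξ^(2*l) ≤ (Y^(m-1):ℝ) := by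
              calc (Y^(2*(j-l)):ℝ) * ξ^(2*l) ≤ (Y^(2*(j-l)):ℝ) * (Y^(2*l):ℝ) :=
                    mul_le_mul_of_nonneg_left hnum (by positivity)
                _ = (Y^(m-1):ℝ) := by rw [← pow_add]; congr 1; omega
            rw [div_le_div_iff₀ (by positivity) (by positivity)]
            calc 4 * (Y^(2*(j-l)):ℝ) * ξ^(2*l) * X^(2-2*b)
                = (4:ℝ) * ((Y^(2*(j-l)):ℝ) * ξ^(2*l)) * X^(2-2*b) := by ring
              _ ≤ (4:ℝ) * (Y^(m-1):ℝ) * X^(2-2*b) :=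
                  mul_le_mul_of_nonneg_right
                    (mul_le_mul_of_nonneg_left hYY (by norm_num)) hXβ0.le
    rcases le_total |ξ| 1 with hξ1 | hξ1
    · -- small ξ
      have hY2 : Y ≤ 2 := by rw [hYdef]; linarith
      have hXβge : (1:ℝ) ≤ X^(2-2*b) := Real.one_le_rpow hX1 (by linarith)
      have hbound : 4 * (Y^(m-1):ℝ) / X^(2-2*b) ≤ 4*2^(m-1) := by
        rw [div_le_iff₀ (by positivity)]
        have h1 : (Y^(m-1):ℝ) ≤ 2^(m-1) := pow_le_pow_left₀ hY0.le hY2 _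
        calc 4 * (Y^(m-1):ℝ) ≤ 4*2^(m-1) :=
              mul_le_mul_of_nonneg_left h1 (by norm_num)
          _ = 4*2^(m-1) * 1 := by ring
          _ ≤ 4*2^(m-1) * X^(2-2*b) :=
              mul_le_mul_of_nonneg_left hXβge (by positivity)
      have hYqge : ((4:ℝ)^m)⁻¹ ≤ Y^q := by
        have hq2m : -(2*(m:ℝ)) ≤ q := by
          rw [hqdef]
          have : (m:ℝ)*(2-2*b) ≤ (m:ℝ)*2 := by
            have : (0:ℝ) ≤ m := Nat.cast_nonneg m
            nlinarith
          have hj0 : (0:ℝ) ≤ (j:ℝ) := Nat.cast_nonneg j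
          linarith
        have e1 : (2:ℝ)^q ≤ Y^q := by
          have hq0 : q ≤ 0 := by
            rw [hqdef, hm]
            push_cast
            have hj0 : (0:ℝ) ≤ (j:ℝ) := Nat.cast_nonneg j
            have h := mul_le_mul_of_nonneg_left hβ.le
              (by positivity : (0:ℝ) ≤ 2*(j:ℝ)+1)
            nlinarith
          have h2 : Y^(-q) ≤ (2:ℝ)^(-q) := Real.rpow_le_rpow hY0.le hY2 (by linarith)
          have hY2q : 0 < Y^(-q) := Real.rpow_pos_of_pos hY0 _
          have h2q : 0 < (2:ℝ)^(-q) := Real.rpow_pos_of_pos (by norm_num) _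
          rw [show q = -(-q) from by ring, Real.rpow_neg hY0.le, Real.rpow_neg (by norm_num)]
          exact inv_anti₀ hY2q h2
        have e2 : ((4:ℝ)^m)⁻¹ ≤ (2:ℝ)^q := by
          have : ((4:ℝ)^m)⁻¹ = (2:ℝ)^(-(2*(m:ℝ))) := by
            rw [show (4:ℝ)^m = (2:ℝ)^(2*m) from by rw [pow_mul]; norm_num,
              ← Real.rpow_natCast 2 (2*m), ← Real.rpow_neg (by norm_num)]
            push_cast
            ring_nf
          rw [this]
          exact Real.rpow_le_rpow_of_exponent_le one_le_two hq2m
        linarith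
      have hfinal : (4:ℝ)*2^(m-1) ≤ 4^(3*m+1) * ((4:ℝ)^m)⁻¹ := by
        rw [show (4:ℝ)^(3*m+1) = 4^(2*m+1) * 4^m from by rw [← pow_add]; congr 1; omega,
          mul_assoc, mul_inv_cancel₀ (by positivity), mul_one]
        calc (4:ℝ)*2^(m-1) ≤ 4*4^(m-1) := by
              have := pow_le_pow_left₀ (by norm_num : (0:ℝ) ≤ 2) (by norm_num : (2:ℝ) ≤ 4) (m-1)
              nlinarith
          _ = 4^(m-1+1) := by ring
          _ ≤ 4^(2*m+1) := pow_le_pow_right₀ (by norm_num) (by omega)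
      calc T^α * (ξ^(2*l)/(X^(2-2*b)*Y^(2*s)))
          ≤ 4 * (Y^(m-1):ℝ) / X^(2-2*b) := main2
        _ ≤ 4*2^(m-1) := hbound
        _ ≤ 4^(3*m+1) * ((4:ℝ)^m)⁻¹ := hfinal
        _ ≤ 4^(3*m+1) * Y^q := mul_le_mul_of_nonneg_left hYqge hC0.le
        _ ≤ 4^(3*m+1) * (Y^q + ξ^(m-1)/X^(2-2*b)) :=
            mul_le_mul_of_nonneg_left (le_add_of_nonneg_right hfrac0) hC0.le
    · -- large ξ
      have hY2ξ : Y ≤ 2*|ξ| := by rw [hYdef]; linarith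
      have hYm1 : (Y^(m-1):ℝ) ≤ 2^(m-1) * ξ^(m-1) := by
        calc (Y^(m-1):ℝ) ≤ (2*|ξ|)^(m-1) := pow_le_pow_left₀ hY0.le hY2ξ _
          _ = 2^(m-1) * |ξ|^(m-1) := mul_pow 2 _ _
          _ = 2^(m-1) * ξ^(m-1) := by rw [hevm.pow_abs]
      have hconst : (4:ℝ)*2^(m-1) ≤ 4^(3*m+1) := by
        calc (4:ℝ)*2^(m-1) ≤ 4*4^(m-1) := by
              have := pow_le_pow_left₀ (by norm_num : (0:ℝ) ≤ 2) (by norm_num : (2:ℝ) ≤ 4) (m-1)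
              nlinarith
          _ = 4^(m-1+1) := by ring
          _ ≤ 4^(3*m+1) := pow_le_pow_right₀ (by norm_num) (by omega)
      calc T^α * (ξ^(2*l)/(X^(2-2*b)*Y^(2*s)))
          ≤ 4 * (Y^(m-1):ℝ) / X^(2-2*b) := main2
        _ ≤ 4*2^(m-1) * (ξ^(m-1)/X^(2-2*b)) := by
            rw [div_le_iff₀ (by positivity),
              show 4*2^(m-1)*(ξ^(m-1)/X^(2-2*b))*X^(2-2*b)
                  = 4*(2^(m-1)*ξ^(m-1))*(X^(2-2*b)/X^(2-2*b)) from by ring,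
              div_self (ne_of_gt hXβ0), mul_one]
            exact mul_le_mul_of_nonneg_left hYm1 (by norm_num)
        _ ≤ 4^(3*m+1) * (ξ^(m-1)/X^(2-2*b)) := mul_le_mul_of_nonneg_right hconst hfrac0
        _ ≤ 4^(3*m+1) * (Y^q + ξ^(m-1)/X^(2-2*b)) :=
            mul_le_mul_of_nonneg_left (le_add_of_nonneg_left hYq0.le) hC0.le
theorem G1_bound (m j l : ℕ) (hj : 1 ≤ j) (hm : m = 2*j + 1) (hl : l + 1 ≤ j)
    (s b : ℝ) (hs1 : -1 ≤ s) (hs2 : s ≤ 1/2) (hb1 : 0 ≤ b) (hb2 : b < 1/2) :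
    ∃ c : ℝ, ∀ τ : ℝ,
      (1 + |τ|) ^ (2 * (s + (j : ℝ) - (l : ℝ)) / (m : ℝ)) *
        (∫ ξ : ℝ, ξ ^ (2*l) / ((1 + |τ - ξ ^ m|) ^ (2 - 2*b) * (1 + |ξ|) ^ (2*s))) ≤ c := by
  have hmodd : Odd m := by rw [hm]; exact ⟨j, by ring⟩
  have hm0 : 0 < (m:ℝ) := by rw [hm]; positivity
  have hmr : (m:ℝ) = 2*(j:ℝ)+1 := by rw [hm]; push_cast; ring
  have hjr : (1:ℝ) ≤ (j:ℝ) := by exact_mod_cast hj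
  have hjl : (l:ℝ) + 1 ≤ (j:ℝ) := by exact_mod_cast hl
  have hl0 : (0:ℝ) ≤ (l:ℝ) := Nat.cast_nonneg l
  set α : ℝ := 2 * (s + (j : ℝ) - (l : ℝ)) / (m : ℝ) with hαdef
  have hα0 : 0 ≤ α := by apply div_nonneg _ hm0.le; linarith
  have hα1 : α ≤ 1 := by rw [hαdef, div_le_one hm0, hmr]; linarith
  have hβ : (1:ℝ) < 2 - 2*b := by linarith
  have hβ2 : (2:ℝ) - 2*b ≤ 2 := by linarith
  have hmα : (m:ℝ) * α = 2*(s+(j:ℝ)-(l:ℝ)) := by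
    rw [hαdef, mul_div_cancel₀ _ hm0.ne']
  set q : ℝ := 2*(j:ℝ) - (m:ℝ)*(2-2*b) with hqdef
  have hq : q < -1 := by rw [hqdef, hmr]; nlinarith
  set C : ℝ := 4 ^ (3*m+1) with hCdef
  have hC0 : (0:ℝ) < C := by positivity
  have key : ∀ τ ξ : ℝ,
      (1+|τ|)^α * (ξ^(2*l)/((1+|τ-ξ^m|)^(2-2*b)*(1+|ξ|)^(2*s))) ≤
        C * ((1+|ξ|)^q + ξ^(m-1)/(1+|τ-ξ^m|)^(2-2*b)) :=
    fun τ ξ => key_pointwise m j l s b α q hl (by omega) hα0 hα1 hβ hβ2 hmα hqdef τ ξ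
  refine ⟨C * ((∫ ξ:ℝ, (1+|ξ|)^q) + (1/(m:ℝ)) * ∫ u:ℝ, 1/(1+|u|)^(2-2*b)), fun τ => ?_⟩
  have hI1 : Integrable (fun ξ:ℝ => (1+|ξ|)^q) := by
    have h := integrable_one_add_norm (E:=ℝ) (μ := volume) (r := -q)
      (by rw [Module.finrank_self]; push_cast; linarith)
    exact h.congr (Filter.Eventually.of_forall fun x => by
      simp only [Real.norm_eq_abs, neg_neg])
  have hI2' : Integrable (fun u:ℝ => 1/(1+|τ-u|)^(2-2*b)) := integrable_shift hβ τ
  have hI2 : Integrable (fun ξ:ℝ => ξ^(m-1) / (1+|τ-ξ^m|)^(2-2*b)) := by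
    have h := (integrable_comp_odd_pow hmodd hI2').const_mul (1/(m:ℝ))
    refine h.congr (Filter.Eventually.of_forall fun x => ?_)
    field_simp
  have hval2 : ∫ ξ:ℝ, ξ^(m-1)/(1+|τ-ξ^m|)^(2-2*b)
      = (1/(m:ℝ)) * ∫ u:ℝ, 1/(1+|u|)^(2-2*b) := by
    rw [← integral_shift (r := 2-2*b) τ,
      ← integral_comp_odd_pow hmodd (fun u => 1/(1+|τ-u|)^(2-2*b)), ← integral_const_mul]
    refine integral_congr_ae (Filter.Eventually.of_forall fun x => ?_)
    simp only
    field_simp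
  calc (1+|τ|)^α * ∫ ξ:ℝ, ξ^(2*l)/((1+|τ-ξ^m|)^(2-2*b)*(1+|ξ|)^(2*s))
      = ∫ ξ:ℝ, (1+|τ|)^α * (ξ^(2*l)/((1+|τ-ξ^m|)^(2-2*b)*(1+|ξ|)^(2*s))) :=
        (integral_const_mul _ _).symm
    _ ≤ ∫ ξ:ℝ, C * ((1+|ξ|)^q + ξ^(m-1)/(1+|τ-ξ^m|)^(2-2*b)) := by
        refine integral_mono_of_nonneg (Filter.Eventually.of_forall fun ξ => ?_)
          ((hI1.add hI2).const_mul C) (Filter.Eventually.of_forall (key τ))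
        exact mul_nonneg (Real.rpow_nonneg (by positivity) _)
          (div_nonneg ((even_two_mul l).pow_nonneg ξ)
            (mul_nonneg (Real.rpow_nonneg (by positivity) _)
              (Real.rpow_nonneg (by positivity) _)))
    _ = C * ((∫ ξ:ℝ, (1+|ξ|)^q) + (1/(m:ℝ)) * ∫ u:ℝ, 1/(1+|u|)^(2-2*b)) := by
        rw [integral_const_mul, integral_add hI1 hI2, hval2]
end

section
/- Let m = 2j+1 with integer j ≥ 1, let ℓ be an integer with 0 ≤ ℓ ≤ j-1, and let 0 < b < 1/2. Define G₂(τ) = ∫_ℝ ξ^{2ℓ} / (1+|τ-ξ^m|)^{2-2b} dξ. Then there is a constant c_b such that sup over τ ∈ ℝ of (1+|τ|)^{2(j-ℓ)/m} G₂(τ) ≤ c_b. -/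
open MeasureTheory Set Real

lemma G2aux_integrable {q : ℝ} (hq : 1 < q) :
    Integrable (fun v : ℝ => (1 + |v|) ^ (-q)) := by
  have h : ((Module.finrank ℝ ℝ : ℝ)) < q := by simpa using hq
  simpa [Real.norm_eq_abs] using integrable_one_add_norm (E := ℝ) (μ := volume) h

lemma G2aux_key {q θ : ℝ} (hq : 1 < q) (hθ0 : 0 < θ) (hθ1 : θ < 1) (τ : ℝ) :
    ∫ u in Ioi (0:ℝ), u ^ (θ - 1) * (1 + |τ - u|) ^ (-q)
      ≤ ((∫ v : ℝ, (1 + |v|) ^ (-q)) + 2 ^ (q - 1) / θ) * ((1 + |τ|) / 2) ^ (θ - 1) := by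
  set T : ℝ := (1 + |τ|) / 2 with hTdef
  have hT2 : (1:ℝ)/2 ≤ T := by
    have := abs_nonneg τ; rw [hTdef]; linarith
  have hT0 : 0 < T := lt_of_lt_of_le one_half_pos hT2
  have hτint : Integrable (fun u : ℝ => (1 + |τ - u|) ^ (-q)) := by
    have := (G2aux_integrable hq).comp_sub_left τ
    simpa using this
  have hlow : ∀ u ∈ Ioc (0:ℝ) T, T ≤ 1 + |τ - u| := by
    intro u hu
    have h1 : |τ| - |u| ≤ |τ - u| := abs_sub_abs_le_abs_sub τ u
    have h2 : |u| = u := abs_of_pos hu.1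
    have h3 : u ≤ T := hu.2
    rw [h2] at h1
    rw [hTdef] at h3 ⊢
    linarith
  have hmeas : AEStronglyMeasurable
      (fun u : ℝ => u ^ (θ - 1) * (1 + |τ - u|) ^ (-q)) (volume : Measure ℝ) := by
    apply Measurable.aestronglyMeasurable; fun_prop
  have hIocInt : IntegrableOn (fun u : ℝ => u ^ (θ - 1)) (Ioc (0:ℝ) T) := by
    have := intervalIntegral.intervalIntegrable_rpow' (a := 0) (b := T)
      (r := θ - 1) (by linarith)
    rwa [intervalIntegrable_iff_integrableOn_Ioc_of_le hT0.le] at this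
  have hI1 : IntegrableOn (fun u : ℝ => u ^ (θ - 1) * (1 + |τ - u|) ^ (-q))
      (Ioc (0:ℝ) T) := by
    apply Integrable.mono' hIocInt hmeas.restrict
    filter_upwards [ae_restrict_mem measurableSet_Ioc] with u hu
    have hu0 : 0 ≤ u := hu.1.le
    have hb0 : (0:ℝ) ≤ (1 + |τ - u|) ^ (-q) := rpow_nonneg (by positivity) _
    have hb1 : (1 + |τ - u|) ^ (-q) ≤ 1 :=
      rpow_le_one_of_one_le_of_nonpos (by simp [abs_nonneg]) (by linarith)
    rw [Real.norm_eq_abs, abs_of_nonneg (mul_nonneg (rpow_nonneg hu0 _) hb0)]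
    nlinarith [rpow_nonneg hu0 (θ - 1)]
  have hI2 : IntegrableOn (fun u : ℝ => u ^ (θ - 1) * (1 + |τ - u|) ^ (-q))
      (Ioi T) := by
    apply Integrable.mono' ((hτint.const_mul (T ^ (θ - 1))).integrableOn) hmeas.restrict
    filter_upwards [ae_restrict_mem measurableSet_Ioi] with u hu
    have hu0 : 0 < u := lt_trans hT0 hu
    have hb0 : (0:ℝ) ≤ (1 + |τ - u|) ^ (-q) := rpow_nonneg (by positivity) _
    have hub : u ^ (θ - 1) ≤ T ^ (θ - 1) :=
      rpow_le_rpow_of_nonpos hT0 (le_of_lt hu) (by linarith)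
    rw [Real.norm_eq_abs, abs_of_nonneg (mul_nonneg (rpow_nonneg hu0.le _) hb0)]
    exact mul_le_mul_of_nonneg_right hub hb0
  have hsplit : ∫ u in Ioi (0:ℝ), u ^ (θ - 1) * (1 + |τ - u|) ^ (-q)
      = (∫ u in Ioc (0:ℝ) T, u ^ (θ - 1) * (1 + |τ - u|) ^ (-q))
        + ∫ u in Ioi T, u ^ (θ - 1) * (1 + |τ - u|) ^ (-q) := by
    rw [← Ioc_union_Ioi_eq_Ioi hT0.le,
      setIntegral_union (Ioc_disjoint_Ioi le_rfl) measurableSet_Ioi hI1 hI2]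
  have hB1 : (∫ u in Ioc (0:ℝ) T, u ^ (θ - 1) * (1 + |τ - u|) ^ (-q))
      ≤ 2 ^ (q - 1) / θ * T ^ (θ - 1) := by
    have step1 : (∫ u in Ioc (0:ℝ) T, u ^ (θ - 1) * (1 + |τ - u|) ^ (-q))
        ≤ ∫ u in Ioc (0:ℝ) T, u ^ (θ - 1) * T ^ (-q) := by
      apply setIntegral_mono_on hI1 (hIocInt.mul_const _) measurableSet_Ioc
      intro u hu
      have hb : (1 + |τ - u|) ^ (-q) ≤ T ^ (-q) :=
        rpow_le_rpow_of_nonpos hT0 (hlow u hu) (by linarith)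
      exact mul_le_mul_of_nonneg_left hb (rpow_nonneg hu.1.le _)
    have step2 : (∫ u in Ioc (0:ℝ) T, u ^ (θ - 1) * T ^ (-q))
        = T ^ θ / θ * T ^ (-q) := by
      rw [integral_mul_const, ← intervalIntegral.integral_of_le hT0.le,
        integral_rpow (Or.inl (by linarith))]
      rw [sub_add_cancel, Real.zero_rpow (by linarith), sub_zero]
    have step3 : T ^ θ / θ * T ^ (-q) ≤ 2 ^ (q - 1) / θ * T ^ (θ - 1) := by
      have e1 : T ^ θ * T ^ (-q) = T ^ (θ - 1) * T ^ (1 - q) := by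
        rw [← Real.rpow_add hT0, ← Real.rpow_add hT0]; ring_nf
      have e2 : T ^ (1 - q) ≤ 2 ^ (q - 1) := by
        have h3 : T ^ (1 - q) ≤ ((1:ℝ)/2) ^ (1 - q) :=
          rpow_le_rpow_of_nonpos one_half_pos hT2 (by linarith)
        have h4 : ((1:ℝ)/2) ^ (1 - q) = 2 ^ (q - 1) := by
          rw [one_div, Real.inv_rpow (by norm_num : (0:ℝ) ≤ 2),
            ← Real.rpow_neg (by norm_num : (0:ℝ) ≤ 2), neg_sub]
        linarith
      have hTθ1 : (0:ℝ) ≤ T ^ (θ - 1) := rpow_nonneg hT0.le _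
      calc T ^ θ / θ * T ^ (-q) = T ^ θ * T ^ (-q) / θ := by ring
        _ = T ^ (θ - 1) * T ^ (1 - q) / θ := by rw [e1]
        _ ≤ T ^ (θ - 1) * 2 ^ (q - 1) / θ := by gcongr
        _ = 2 ^ (q - 1) / θ * T ^ (θ - 1) := by ring
    linarith
  have hB2 : (∫ u in Ioi T, u ^ (θ - 1) * (1 + |τ - u|) ^ (-q))
      ≤ (∫ v : ℝ, (1 + |v|) ^ (-q)) * T ^ (θ - 1) := by
    have step1 : (∫ u in Ioi T, u ^ (θ - 1) * (1 + |τ - u|) ^ (-q))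
        ≤ ∫ u in Ioi T, T ^ (θ - 1) * (1 + |τ - u|) ^ (-q) := by
      apply setIntegral_mono_on hI2 ((hτint.const_mul _).integrableOn) measurableSet_Ioi
      intro u hu
      have hb0 : (0:ℝ) ≤ (1 + |τ - u|) ^ (-q) := rpow_nonneg (by positivity) _
      exact mul_le_mul_of_nonneg_right
        (rpow_le_rpow_of_nonpos hT0 (le_of_lt hu) (by linarith)) hb0
    have step2 : (∫ u in Ioi T, T ^ (θ - 1) * (1 + |τ - u|) ^ (-q))
        = T ^ (θ - 1) * ∫ u in Ioi T, (1 + |τ - u|) ^ (-q) := integral_const_mul _ _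
    have step3 : (∫ u in Ioi T, (1 + |τ - u|) ^ (-q))
        ≤ ∫ v : ℝ, (1 + |v|) ^ (-q) := by
      have h1 : (∫ u in Ioi T, (1 + |τ - u|) ^ (-q))
          ≤ ∫ u : ℝ, (1 + |τ - u|) ^ (-q) :=
        setIntegral_le_integral hτint
          (Filter.Eventually.of_forall fun u => rpow_nonneg (by positivity) _)
      have h2 : (∫ u : ℝ, (1 + |τ - u|) ^ (-q)) = ∫ v : ℝ, (1 + |v|) ^ (-q) :=
        integral_sub_left_eq_self (fun v : ℝ => (1 + |v|) ^ (-q)) volume τ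
      linarith
    have hTθ1 : (0:ℝ) ≤ T ^ (θ - 1) := rpow_nonneg hT0.le _
    calc (∫ u in Ioi T, u ^ (θ - 1) * (1 + |τ - u|) ^ (-q))
        ≤ T ^ (θ - 1) * ∫ u in Ioi T, (1 + |τ - u|) ^ (-q) := by rw [← step2]; exact step1
      _ ≤ T ^ (θ - 1) * ∫ v : ℝ, (1 + |v|) ^ (-q) := by
          exact mul_le_mul_of_nonneg_left step3 hTθ1
      _ = (∫ v : ℝ, (1 + |v|) ^ (-q)) * T ^ (θ - 1) := by ring
  rw [hsplit]
  have : ((∫ v : ℝ, (1 + |v|) ^ (-q)) + 2 ^ (q - 1) / θ) * T ^ (θ - 1)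
      = 2 ^ (q - 1) / θ * T ^ (θ - 1) + (∫ v : ℝ, (1 + |v|) ^ (-q)) * T ^ (θ - 1) := by ring
  rw [← hTdef] at *
  linarith [hB1, hB2]

lemma G2aux_cov {q : ℝ} (m l : ℕ) (hml : 2*l + 1 < m) (τ : ℝ) :
    ∫ ξ in Ioi (0:ℝ), (ξ ^ (2*l) : ℝ) * (1 + |τ - ξ ^ m|) ^ (-q)
      = (m:ℝ)⁻¹ * ∫ u in Ioi (0:ℝ),
          u ^ ((2*(l:ℝ)+1)/(m:ℝ) - 1) * (1 + |τ - u|) ^ (-q) := by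
  have hm0 : (0:ℝ) < (m:ℝ) := by exact_mod_cast (by omega : 0 < m)
  have hp : ((m:ℝ)) ≠ 0 := hm0.ne'
  have key := integral_comp_rpow_Ioi
    (fun u : ℝ => (m:ℝ)⁻¹ * (u ^ ((2*(l:ℝ)+1)/(m:ℝ) - 1) * (1 + |τ - u|) ^ (-q))) hp
  rw [← integral_const_mul, ← key]
  refine setIntegral_congr_fun measurableSet_Ioi fun x hx => ?_
  have hx0 : (0:ℝ) < x := hx
  have h1 : x ^ ((m:ℝ)) = x ^ m := Real.rpow_natCast x m
  have h2 : (x ^ (m:ℝ)) ^ ((2*(l:ℝ)+1)/(m:ℝ) - 1)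
      = x ^ ((2*(l:ℝ)+1) - (m:ℝ)) := by
    rw [← Real.rpow_mul hx0.le]
    congr 1
    field_simp
  have h3 : x ^ ((m:ℝ) - 1) * x ^ ((2*(l:ℝ)+1) - (m:ℝ)) = x ^ (2*l) := by
    rw [← Real.rpow_add hx0,
      show ((m:ℝ) - 1) + ((2*(l:ℝ)+1) - (m:ℝ)) = ((2*l : ℕ) : ℝ) by push_cast; ring]
    exact Real.rpow_natCast x (2*l)
  simp only [smul_eq_mul]
  rw [h2, h1, abs_of_pos hm0, ← h3]
  field_simp

theorem G2_bound (m j l : ℕ) (hj : 1 ≤ j) (hm : m = 2*j + 1) (hl : l + 1 ≤ j)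
    (b : ℝ) (hb1 : 0 < b) (hb2 : b < 1/2) :
    ∃ c : ℝ, ∀ τ : ℝ,
      (1 + |τ|) ^ (2 * ((j : ℝ) - (l : ℝ)) / (m : ℝ)) *
        (∫ ξ : ℝ, ξ ^ (2*l) / (1 + |τ - ξ ^ m|) ^ (2 - 2*b)) ≤ c := by
  have hm0 : (0:ℝ) < (m:ℝ) := by exact_mod_cast (by omega : 0 < m)
  have hmr : (m:ℝ) = 2*(j:ℝ) + 1 := by rw [hm]; push_cast; ring
  set q : ℝ := 2 - 2*b with hqdef
  have hq : 1 < q := by rw [hqdef]; linarith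
  set θ : ℝ := (2*(l:ℝ)+1)/(m:ℝ) with hθdef
  have hml : 2*l + 1 < m := by omega
  have hθ0 : 0 < θ := by rw [hθdef]; positivity
  have hθ1 : θ < 1 := by
    rw [hθdef, div_lt_one hm0]
    have : ((2*l+1 : ℕ) : ℝ) < (m:ℝ) := by exact_mod_cast hml
    push_cast at this
    linarith
  have hα : θ - 1 = -(2 * ((j:ℝ) - (l:ℝ)) / (m:ℝ)) := by
    have hne : (2*(j:ℝ)+1) ≠ 0 := by positivity
    rw [hθdef, hmr]
    field_simp
    ring
  have hα1 : 2 * ((j:ℝ) - (l:ℝ)) / (m:ℝ) ≤ 1 := by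
    rw [div_le_one hm0, hmr]
    have := Nat.cast_nonneg (α := ℝ) l
    linarith
  set C : ℝ := (∫ v : ℝ, (1 + |v|) ^ (-q)) + 2 ^ (q - 1) / θ with hCdef
  have hC0 : 0 ≤ C := by
    rw [hCdef]
    apply add_nonneg (integral_nonneg fun v => Real.rpow_nonneg (by positivity) _)
    positivity
  have hside : ∀ σ : ℝ, (∫ ξ in Ioi (0:ℝ), (ξ ^ (2*l) : ℝ) * (1 + |σ - ξ ^ m|) ^ (-q))
      ≤ (m:ℝ)⁻¹ * C * ((1 + |σ|) / 2) ^ (θ - 1) := by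
    intro σ
    rw [G2aux_cov m l hml σ, ← hθdef]
    have hkey := G2aux_key hq hθ0 hθ1 σ
    rw [← hCdef] at hkey
    calc (m:ℝ)⁻¹ * ∫ u in Ioi (0:ℝ), u ^ (θ - 1) * (1 + |σ - u|) ^ (-q)
        ≤ (m:ℝ)⁻¹ * (C * ((1 + |σ|) / 2) ^ (θ - 1)) := by
          apply mul_le_mul_of_nonneg_left hkey (by positivity)
      _ = (m:ℝ)⁻¹ * C * ((1 + |σ|) / 2) ^ (θ - 1) := by ring
  refine ⟨4 * ((m:ℝ)⁻¹ * C), fun τ => ?_⟩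
  have hO : (0:ℝ) ≤ 4 * ((m:ℝ)⁻¹ * C) := by positivity
  have hpos : (0:ℝ) < 1 + |τ| := by positivity
  have hfun : (fun ξ : ℝ => ξ ^ (2*l) / (1 + |τ - ξ ^ m|) ^ q)
      = fun ξ : ℝ => ξ ^ (2*l) * (1 + |τ - ξ ^ m|) ^ (-q) := by
    funext ξ
    rw [div_eq_mul_inv, ← Real.rpow_neg (by positivity)]
  rw [hfun]
  by_cases hInt : Integrable (fun ξ : ℝ => ξ ^ (2*l) * (1 + |τ - ξ ^ m|) ^ (-q)) volume
  · have hsplit := intervalIntegral.integral_Iic_add_Ioi (b := (0:ℝ)) hInt.integrableOn hInt.integrableOn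
    have hIic : (∫ ξ in Iic (0:ℝ), ξ ^ (2*l) * (1 + |τ - ξ ^ m|) ^ (-q))
        = ∫ ξ in Ioi (0:ℝ), ξ ^ (2*l) * (1 + |(-τ) - ξ ^ m|) ^ (-q) := by
      have hrefl := integral_comp_neg_Ioi (0:ℝ)
        (fun ξ : ℝ => ξ ^ (2*l) * (1 + |τ - ξ ^ m|) ^ (-q))
      rw [neg_zero] at hrefl
      rw [← hrefl]
      refine setIntegral_congr_fun measurableSet_Ioi fun ξ hξ => ?_
      have hOdd : Odd m := ⟨j, by omega⟩
      have hEven : Even (2*l) := even_two_mul l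

      rw [hOdd.neg_pow, hEven.neg_pow,
        show τ - -(ξ^m) = -((-τ) - ξ^m) from by ring, abs_neg]
    have h1 := hside τ
    have h2 := hside (-τ)
    rw [abs_neg] at h2
    have hItot : (∫ ξ : ℝ, ξ ^ (2*l) * (1 + |τ - ξ ^ m|) ^ (-q))
        ≤ 2 * ((m:ℝ)⁻¹ * C) * ((1 + |τ|) / 2) ^ (θ - 1) := by
      rw [← hsplit, hIic]
      linarith
    have e1 : (1 + |τ|) ^ (2 * ((j:ℝ) - (l:ℝ)) / (m:ℝ)) * ((1 + |τ|) / 2) ^ (θ - 1)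
        = 2 ^ (2 * ((j:ℝ) - (l:ℝ)) / (m:ℝ)) := by
      rw [hα, Real.div_rpow hpos.le (by norm_num : (0:ℝ) ≤ 2),
        Real.rpow_neg hpos.le, Real.rpow_neg (by norm_num : (0:ℝ) ≤ 2)]
      field_simp
    have e2 : (2:ℝ) ^ (2 * ((j:ℝ) - (l:ℝ)) / (m:ℝ)) ≤ 2 := by
      calc (2:ℝ) ^ (2 * ((j:ℝ) - (l:ℝ)) / (m:ℝ)) ≤ 2 ^ (1:ℝ) :=
            Real.rpow_le_rpow_of_exponent_le one_le_two hα1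
        _ = 2 := Real.rpow_one 2
    have hInonneg : (0:ℝ) ≤ ∫ ξ : ℝ, ξ ^ (2*l) * (1 + |τ - ξ ^ m|) ^ (-q) := by
      apply integral_nonneg
      intro ξ
      have : (0:ℝ) ≤ ξ ^ (2*l) := by
        rw [pow_mul]
        positivity
      positivity
    calc (1 + |τ|) ^ (2 * ((j:ℝ) - (l:ℝ)) / (m:ℝ)) *
          (∫ ξ : ℝ, ξ ^ (2*l) * (1 + |τ - ξ ^ m|) ^ (-q))
        ≤ (1 + |τ|) ^ (2 * ((j:ℝ) - (l:ℝ)) / (m:ℝ)) *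
          (2 * ((m:ℝ)⁻¹ * C) * ((1 + |τ|) / 2) ^ (θ - 1)) := by
          apply mul_le_mul_of_nonneg_left hItot (Real.rpow_nonneg hpos.le _)
      _ = 2 * ((m:ℝ)⁻¹ * C) *
          ((1 + |τ|) ^ (2 * ((j:ℝ) - (l:ℝ)) / (m:ℝ)) * ((1 + |τ|) / 2) ^ (θ - 1)) := by
          ring
      _ = 2 * ((m:ℝ)⁻¹ * C) * 2 ^ (2 * ((j:ℝ) - (l:ℝ)) / (m:ℝ)) := by rw [e1]
      _ ≤ 2 * ((m:ℝ)⁻¹ * C) * 2 := by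
          apply mul_le_mul_of_nonneg_left e2 (by positivity)
      _ = 4 * ((m:ℝ)⁻¹ * C) := by ring
  · rw [integral_undef hInt, mul_zero]
    exact hO
end

section
/- Let m = 2j+1 with j ≥ 1 odd dispersion order, 0 ≤ ℓ ≤ j-1, b ≥ 0, ε > 0, and s ≥ -j - 1/2 - ε. Suppose F(ξ,τ) satisfies |F(ξ,τ)| ≤ C_n |τ|^{-1/m} (|τ|^{1/m}/(|ξ|+|τ|^{1/m}))^n for every n ≥ 0 and all τ < -1, ξ ∈ ℝ. Then for all τ < -1, ∫_ℝ (1+|ξ|)^{2s} (1+|τ-ξ^m|)^{2b} |ξ^j F(ξ,τ)|² dξ ≤ c_{s,b,m} |τ|^{(2(s+j)+2mb-1+2ε)/m}. -/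
open MeasureTheory

lemma pointwise_aux (m j n : ℕ) (b ε s β T x w C Q : ℝ) (hb : 0 ≤ b)
    (hx : 0 ≤ x) (hT : 1 ≤ T) (hβ : β = 2*s + 2*(j:ℝ) + 1 + 2*ε) (hβ0 : 0 ≤ β)
    (hn : β + 2*(m:ℝ)*b ≤ 2*n) (hw : 0 ≤ w) (hQ0 : 0 ≤ Q)
    (hQ : Q ≤ 3*(x+T)^m) (hwb : w ≤ C * T⁻¹ * (T/(x+T))^n) :
    (1+x)^(2*s) * Q^(2*b) * (x^j * w)^2 ≤
      (C^2 * 2^β * 3^(2*b)) * T^(β + 2*(m:ℝ)*b - 2) * (1+x)^(-(1+2*ε)) := by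
  have hT0 : (0:ℝ) < T := by linarith
  have hu0 : (0:ℝ) < x + T := by linarith
  have hP0 : (0:ℝ) < 1 + x := by linarith
  have hP2u : 1 + x ≤ 2*(x+T) := by linarith
  have e1 : (1+x)^(2*s) * (1+x)^(2*j) = (1+x)^β * (1+x)^(-(1+2*ε)) := by
    rw [← Real.rpow_natCast (1+x) (2*j), ← Real.rpow_add hP0, ← Real.rpow_add hP0]
    congr 1; push_cast; rw [hβ]; ring
  have e2 : (3*(x+T)^m)^(2*b) = 3^(2*b) * (x+T)^((m:ℝ)*(2*b)) := by
    rw [Real.mul_rpow (by norm_num) (by positivity), ← Real.rpow_natCast (x+T) m,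
      ← Real.rpow_mul hu0.le]
  have e3 : (T/(x+T))^(2*n) = T^(((2*n:ℕ):ℝ)) * (x+T)^(-((2*n:ℕ):ℝ)) := by
    rw [div_eq_mul_inv, mul_pow, Real.rpow_natCast, Real.rpow_neg hu0.le,
      Real.rpow_natCast, inv_pow]
  have e4 : T⁻¹^2 = T^(-(2:ℝ)) := by
    rw [inv_pow, ← Real.rpow_natCast T 2, ← Real.rpow_neg hT0.le]
    norm_num
  have hPβ : (1+x)^β ≤ 2^β * (x+T)^β := by
    rw [← Real.mul_rpow (by norm_num) hu0.le]
    exact Real.rpow_le_rpow hP0.le hP2u hβ0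
  have hu_all : (x+T)^((m:ℝ)*(2*b)) * (x+T)^(-((2*n:ℕ):ℝ)) =
      (x+T)^((m:ℝ)*(2*b) - ((2*n:ℕ):ℝ)) := by
    rw [← Real.rpow_add hu0, sub_eq_add_neg]
  have hβu : (x+T)^β * (x+T)^((m:ℝ)*(2*b) - ((2*n:ℕ):ℝ)) =
      (x+T)^(β + (m:ℝ)*(2*b) - ((2*n:ℕ):ℝ)) := by
    rw [← Real.rpow_add hu0]; congr 1; ring
  have hu_le : (x+T)^(β + (m:ℝ)*(2*b) - ((2*n:ℕ):ℝ)) ≤ T^(β + (m:ℝ)*(2*b) - ((2*n:ℕ):ℝ)) := by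
    apply Real.rpow_le_rpow_of_nonpos hT0 (by linarith)
    push_cast; linarith
  have hT_all : T^(-(2:ℝ)) * T^(((2*n:ℕ)):ℝ) * T^(β + (m:ℝ)*(2*b) - ((2*n:ℕ):ℝ)) =
      T^(β + 2*(m:ℝ)*b - 2) := by
    rw [← Real.rpow_add hT0, ← Real.rpow_add hT0]; congr 1; ring
  calc (1+x)^(2*s) * Q^(2*b) * (x^j * w)^2
      ≤ (1+x)^(2*s) * (3*(x+T)^m)^(2*b) * (x^j * (C * T⁻¹ * (T/(x+T))^n))^2 := by
        have hwb' : x^j * w ≤ x^j * (C * T⁻¹ * (T/(x+T))^n) :=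
          mul_le_mul_of_nonneg_left hwb (pow_nonneg hx j)
        have h2 : (x^j * w)^2 ≤ (x^j * (C * T⁻¹ * (T/(x+T))^n))^2 :=
          pow_le_pow_left₀ (by positivity) hwb' 2
        have hQb : Q^(2*b) ≤ (3*(x+T)^m)^(2*b) := Real.rpow_le_rpow hQ0 hQ (by linarith)
        have := mul_le_mul hQb h2 (by positivity) (Real.rpow_nonneg (by positivity) _)
        calc (1+x)^(2*s) * Q^(2*b) * (x^j * w)^2
            = (1+x)^(2*s) * (Q^(2*b) * (x^j * w)^2) := by ring
          _ ≤ (1+x)^(2*s) * ((3*(x+T)^m)^(2*b) * (x^j * (C * T⁻¹ * (T/(x+T))^n))^2) :=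
              mul_le_mul_of_nonneg_left this (Real.rpow_nonneg hP0.le _)
          _ = (1+x)^(2*s) * (3*(x+T)^m)^(2*b) * (x^j * (C * T⁻¹ * (T/(x+T))^n))^2 := by ring
    _ = (1+x)^(2*s) * x^(2*j) * (3*(x+T)^m)^(2*b) * C^2 * T⁻¹^2 * (T/(x+T))^(2*n) := by
        ring
    _ ≤ (1+x)^(2*s) * (1+x)^(2*j) * (3*(x+T)^m)^(2*b) * C^2 * T⁻¹^2 * (T/(x+T))^(2*n) := by
        have hxP : x^(2*j) ≤ (1+x)^(2*j) := pow_le_pow_left₀ hx (by linarith) _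
        gcongr
    _ = ((1+x)^β * (1+x)^(-(1+2*ε))) * (3^(2*b) * (x+T)^((m:ℝ)*(2*b))) * C^2 * T^(-(2:ℝ))
          * (T^(((2*n:ℕ)):ℝ) * (x+T)^(-((2*n:ℕ):ℝ))) := by
        rw [e1, e2, e3, e4]
    _ ≤ ((2^β * (x+T)^β) * (1+x)^(-(1+2*ε))) * (3^(2*b) * (x+T)^((m:ℝ)*(2*b))) * C^2
          * T^(-(2:ℝ)) * (T^(((2*n:ℕ)):ℝ) * (x+T)^(-((2*n:ℕ):ℝ))) := by
        gcongr
    _ = (C^2 * 2^β * 3^(2*b)) * (1+x)^(-(1+2*ε)) * (T^(-(2:ℝ)) * T^(((2*n:ℕ)):ℝ))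
          * ((x+T)^β * ((x+T)^((m:ℝ)*(2*b)) * (x+T)^(-((2*n:ℕ):ℝ)))) := by ring
    _ ≤ (C^2 * 2^β * 3^(2*b)) * (1+x)^(-(1+2*ε)) * (T^(-(2:ℝ)) * T^(((2*n:ℕ)):ℝ))
          * T^(β + (m:ℝ)*(2*b) - ((2*n:ℕ):ℝ)) := by
        rw [hu_all, hβu]
        exact mul_le_mul_of_nonneg_left hu_le (by positivity)
    _ = (C^2 * 2^β * 3^(2*b)) * T^(β + 2*(m:ℝ)*b - 2) * (1+x)^(-(1+2*ε)) := by
        rw [← hT_all]; ring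

theorem multiplier_xi_integral_bound (m j l : ℕ) (hj : 1 ≤ j) (hm : m = 2*j + 1)
    (hl : l + 1 ≤ j) (b ε s : ℝ) (hb : 0 ≤ b) (hε : 0 < ε)
    (hs : -(j : ℝ) - 1/2 - ε ≤ s) (F : ℝ → ℝ → ℂ)
    (hF : ∀ n : ℕ, ∃ C : ℝ, ∀ τ : ℝ, τ < -1 → ∀ ξ : ℝ,
      ‖F ξ τ‖ ≤ C * |τ| ^ (-(1:ℝ)/(m : ℝ)) *
        (|τ| ^ ((1:ℝ)/(m : ℝ)) / (|ξ| + |τ| ^ ((1:ℝ)/(m : ℝ)))) ^ n) :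
    ∃ c : ℝ, ∀ τ : ℝ, τ < -1 →
      (∫ ξ : ℝ, (1 + |ξ|) ^ (2*s) * (1 + |τ - ξ ^ m|) ^ (2*b) *
          ‖(ξ : ℂ) ^ j * F ξ τ‖ ^ 2) ≤
        c * |τ| ^ ((2*(s + (j : ℝ)) + 2*(m : ℝ)*b - 1 + 2*ε) / (m : ℝ)) := by
  have hm0 : (0:ℝ) < (m:ℝ) := by
    rw [hm]; push_cast; positivity
  have hj1 : (1:ℝ) ≤ (j:ℝ) := by exact_mod_cast hj
  set β : ℝ := 2*s + 2*(j:ℝ) + 1 + 2*ε with hβdef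
  have hβ0 : (0:ℝ) ≤ β := by rw [hβdef]; linarith
  have hmb0 : (0:ℝ) ≤ 2*(m:ℝ)*b := by positivity
  set n : ℕ := ⌈(β + 2*(m:ℝ)*b)/2⌉₊ with hndef
  have hn : β + 2*(m:ℝ)*b ≤ 2*n := by
    have h := Nat.le_ceil ((β + 2*(m:ℝ)*b)/2)
    rw [← hndef] at h
    linarith
  obtain ⟨C, hC⟩ := hF n
  have hεint : Integrable (fun x : ℝ => (1+|x|) ^ (-(1+2*ε))) := by
    have h1 : ((Module.finrank ℝ ℝ : ℝ)) < 1+2*ε := by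
      rw [Module.finrank_self]; push_cast; linarith
    simpa [Real.norm_eq_abs] using integrable_one_add_norm (E := ℝ) h1
  set K : ℝ := ∫ x : ℝ, (1+|x|) ^ (-(1+2*ε)) with hKdef
  have hK0 : 0 ≤ K :=
    integral_nonneg fun x => Real.rpow_nonneg (by positivity) _
  refine ⟨C^2 * 2^β * 3^(2*b) * K, ?_⟩
  intro τ hτ
  have hτ1 : 1 < |τ| := by rw [abs_of_neg (by linarith)]; linarith
  have hτ0 : (0:ℝ) ≤ |τ| := abs_nonneg τ
  set T : ℝ := |τ| ^ ((1:ℝ)/(m:ℝ)) with hTdef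
  have hT1 : 1 < T := by
    rw [hTdef]
    exact (Real.one_lt_rpow_iff_of_pos (by linarith)).mpr (Or.inl ⟨hτ1, by positivity⟩)
  have hT0 : (0:ℝ) < T := by linarith
  have hTm : T ^ m = |τ| := by
    rw [hTdef, ← Real.rpow_natCast (|τ| ^ ((1:ℝ)/(m:ℝ))) m, ← Real.rpow_mul hτ0,
      one_div_mul_cancel (ne_of_gt hm0), Real.rpow_one]
  have key : ∀ ξ : ℝ,
      (1 + |ξ|) ^ (2*s) * (1 + |τ - ξ ^ m|) ^ (2*b) * ‖(ξ : ℂ) ^ j * F ξ τ‖ ^ 2 ≤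
      (C^2 * 2^β * 3^(2*b)) * T^(β + 2*(m:ℝ)*b - 2) * (1+|ξ|)^(-(1+2*ε)) := by
    intro ξ
    have hx0 : (0:ℝ) ≤ |ξ| := abs_nonneg ξ
    have hnorm : ‖(ξ : ℂ) ^ j * F ξ τ‖ = |ξ| ^ j * ‖F ξ τ‖ := by
      rw [norm_mul, norm_pow, Complex.norm_real, Real.norm_eq_abs]
    have hQ : 1 + |τ - ξ ^ m| ≤ 3*(|ξ|+T)^m := by
      have h1 : |τ - ξ ^ m| ≤ |τ| + |ξ ^ m| := abs_sub _ _
      have h2 : |ξ ^ m| = |ξ| ^ m := abs_pow ξ m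
      have h3 : T ^ m ≤ (|ξ|+T) ^ m := pow_le_pow_left₀ hT0.le (by linarith) m
      have h4 : |ξ| ^ m ≤ (|ξ|+T) ^ m := pow_le_pow_left₀ hx0 (by linarith) m
      have h5 : (1:ℝ) ≤ T ^ m := one_le_pow₀ hT1.le
      rw [← hTm] at h1
      linarith [h1, h2 ▸ h1]
    have hwb : ‖F ξ τ‖ ≤ C * T⁻¹ * (T/(|ξ|+T))^n := by
      have h := hC τ hτ ξ
      rw [← hTdef] at h
      rwa [show |τ| ^ (-(1:ℝ)/(m:ℝ)) = T⁻¹ by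
        rw [neg_div, Real.rpow_neg hτ0, ← hTdef]] at h
    rw [hnorm]
    exact pointwise_aux m j n b ε s β T |ξ| ‖F ξ τ‖ C (1 + |τ - ξ ^ m|) hb hx0 hT1.le
      hβdef hβ0 hn (norm_nonneg _) (by positivity) hQ hwb
  have hgint : Integrable (fun ξ : ℝ =>
      (C^2 * 2^β * 3^(2*b)) * T^(β + 2*(m:ℝ)*b - 2) * (1+|ξ|)^(-(1+2*ε))) :=
    hεint.const_mul _
  have hle := integral_mono_of_nonneg
    (f := fun ξ : ℝ => (1 + |ξ|) ^ (2*s) * (1 + |τ - ξ ^ m|) ^ (2*b) *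
      ‖(ξ : ℂ) ^ j * F ξ τ‖ ^ 2)
    (Filter.Eventually.of_forall fun ξ => by positivity) hgint
    (Filter.Eventually.of_forall key)
  refine hle.trans ?_
  rw [integral_const_mul]
  have hTq : T^(β + 2*(m:ℝ)*b - 2) =
      |τ| ^ ((2*(s + (j : ℝ)) + 2*(m : ℝ)*b - 1 + 2*ε) / (m : ℝ)) := by
    rw [hTdef, ← Real.rpow_mul hτ0]
    congr 1
    rw [hβdef]
    field_simp
    ring
  rw [← hKdef, hTq]
  ring_nf
  exact le_rfl
end
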